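/- arXiv:1603.03671 — 2 statements merged into one kernel-verified Lean document; each statement's English description precedes it below -/
import Mathlib

section
/- If Γ₁ and Γ₂ are countably infinite groups, then the free product Γ₁ * Γ₂ admits a faithful homogeneous action by automorphisms on any countable simple graph with property (R). -/
/-- A simple graph has property (R) if for all disjoint finite subsets `U`, `W` of its
vertex set there exists a vertex outside `U ∪ W` adjacent to every vertex of `U` and to
no vertex of `W`. -/
def SimpleGraph.HasPropR {V : Type*} (G : SimpleGraph V) : Prop :=
  ∀ U W : Finset V, Disjoint U W →
    ∃ z, z ∉ U ∧ z ∉ W ∧ (∀ u ∈ U, G.Adj z u) ∧ (∀ w ∈ W, ¬ G.Adj z w)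

/-- An action of `Γ` on a graph `G` is homogeneous if every isomorphism between finite
induced subgraphs is realised by a group element. -/
def IsHomogeneousAction {Γ : Type*} [Group Γ] {V : Type*} (G : SimpleGraph V)
    (ρ : Γ →* (G ≃g G)) : Prop :=
  ∀ (A : Finset V) (φ : V → V), Set.InjOn φ (↑A : Set V) →
    (∀ u ∈ A, ∀ v ∈ A, G.Adj u v ↔ G.Adj (φ u) (φ v)) →
    ∃ g : Γ, ∀ u ∈ A, ρ g u = φ u


/-!
Model `R` as `radoGraph Γ₁`, a graph on `Γ₁ × ℕ × Finset ℕ` in which a vertex is joined to the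
lower-level vertices recorded in its code relative to its `Γ₁`-coordinate. Left translation by
`Γ₁` is then a free action by automorphisms, a vertex is adjacent to only finitely many
translates of another, and every adjacency pattern over finitely many levels is realised on the
next level. `Γ₂` acts on `radoGraph Γ₂` in the same way; transporting along an isomorphism
`e : radoGraph Γ₂ ≃g radoGraph Γ₁` gives an action of `Γ₁ ∗ Γ₂`.

Both graphs have property (R), so `e` can be built by back-and-forth, and the construction can
be made generic for countably many dense requirements. Along a nontrivial reduced word, each
`Γ₂`-letter can be forced to send the current vertex to a fresh level, so the word moves some
vertex: the action is faithful. A finite partial isomorphism `S` is realised by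
`(g * h)⁻¹ * k * g` once `e` is forced to send fresh vertices `w` and `k • w` to `g • u` and
`(g * h) • S u`.
-/

noncomputable section

open scoped Classical

open Monoid

namespace SimpleGraph

variable {α β α' β' : Type*} {G : SimpleGraph α} {H : SimpleGraph β}
  {G' : SimpleGraph α'} {H' : SimpleGraph β'}

def Iso.autCongr (e : G ≃g H) : (G ≃g G) ≃* (H ≃g H) where
  toFun f := (e.symm.trans f).trans e
  invFun f := (e.trans f).trans e.symm
  left_inv f := by ext; simp
  right_inv f := by ext; simp
  map_mul' f f' := by ext; simp

@[simp] lemma Iso.autCongr_apply (e : G ≃g H) (f : G ≃g G) (x : β) :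
    e.autCongr f x = e (f (e.symm x)) := rfl

def autOfSMul {Γ : Type*} [Group Γ] [MulAction Γ α] (G : SimpleGraph α)
    (h : ∀ (g : Γ) x y, G.Adj (g • x) (g • y) ↔ G.Adj x y) : Γ →* (G ≃g G) where
  toFun g := ⟨MulAction.toPerm g, h g _ _⟩
  map_one' := by ext x; exact one_smul Γ x
  map_mul' g g' := by ext x; exact mul_smul g g' x

@[simp] lemma autOfSMul_symm_apply {Γ : Type*} [Group Γ] [MulAction Γ α]
    {h : ∀ (g : Γ) x y, G.Adj (g • x) (g • y) ↔ G.Adj x y} (g : Γ) (x : α) :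
    (autOfSMul G h g).symm x = g⁻¹ • x := rfl

structure FinPartialIso (G : SimpleGraph α) (H : SimpleGraph β) where
  graph : Finset (α × β)
  isPartialIso : ∀ r ∈ graph, ∀ r' ∈ graph,
    (r.1 = r'.1 ↔ r.2 = r'.2) ∧ (G.Adj r.1 r'.1 ↔ H.Adj r.2 r'.2)

namespace FinPartialIso

instance : Membership (α × β) (FinPartialIso G H) := ⟨fun p r => r ∈ p.graph⟩

lemma graph_injective : Function.Injective (graph : FinPartialIso G H → Finset (α × β)) := by
  rintro ⟨s, _⟩ ⟨t, _⟩ rfl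
  rfl

instance : PartialOrder (FinPartialIso G H) := PartialOrder.lift graph graph_injective

instance [Countable α] [Countable β] : Countable (FinPartialIso G H) :=
  graph_injective.countable

instance : Inhabited (FinPartialIso G H) := ⟨⟨∅, by simp⟩⟩

variable {p q : FinPartialIso G H} {r r' : α × β} {a : α} {b : β}

@[simp] lemma mem_graph : r ∈ p.graph ↔ r ∈ p := Iff.rfl

lemma fst_eq_iff (hr : r ∈ p) (hr' : r' ∈ p) : r.1 = r'.1 ↔ r.2 = r'.2 :=
  (p.isPartialIso r hr r' hr').1

lemma adj_iff (hr : r ∈ p) (hr' : r' ∈ p) : G.Adj r.1 r'.1 ↔ H.Adj r.2 r'.2 :=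
  (p.isPartialIso r hr r' hr').2

def dom (p : FinPartialIso G H) : Finset α := p.graph.image Prod.fst

def ran (p : FinPartialIso G H) : Finset β := p.graph.image Prod.snd

@[simp] lemma mem_dom : a ∈ p.dom ↔ ∃ b, (a, b) ∈ p := by
  simp only [dom, Finset.mem_image, Prod.exists, exists_and_right, exists_eq_right, mem_graph]

@[simp] lemma mem_ran : b ∈ p.ran ↔ ∃ a, (a, b) ∈ p := by
  simp only [ran, Finset.mem_image, Prod.exists, exists_eq_right, mem_graph]

def Compatible (p : FinPartialIso G H) (a : α) (b : β) : Prop :=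
  ∀ r ∈ p, (a = r.1 ↔ b = r.2) ∧ (G.Adj a r.1 ↔ H.Adj b r.2)

lemma compatible_of_notMem (ha : a ∉ p.dom) (hb : b ∉ p.ran)
    (hadj : ∀ r ∈ p, G.Adj a r.1 ↔ H.Adj b r.2) : p.Compatible a b := by
  refine fun r hr => ⟨⟨?_, ?_⟩, hadj r hr⟩
  · rintro rfl; exact absurd (mem_dom.2 ⟨r.2, hr⟩) ha
  · rintro rfl; exact absurd (mem_ran.2 ⟨r.1, hr⟩) hb

def insert (p : FinPartialIso G H) (a : α) (b : β) (h : p.Compatible a b) :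
    FinPartialIso G H where
  graph := Insert.insert (a, b) p.graph
  isPartialIso := by
    simp only [Finset.mem_insert]
    rintro r (rfl | hr) r' (rfl | hr')
    · simp
    · exact h r' hr'
    · simpa only [eq_comm, G.adj_comm, H.adj_comm] using h r hr
    · exact p.isPartialIso r hr r' hr'

variable {h : p.Compatible a b}

@[simp] lemma mem_insert : r ∈ p.insert a b h ↔ r = (a, b) ∨ r ∈ p := Finset.mem_insert

lemma mem_insert_self : (a, b) ∈ p.insert a b h := mem_insert.2 (.inl rfl)

lemma le_insert : p ≤ p.insert a b h := fun _ => Finset.mem_insert_of_mem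

def symm (p : FinPartialIso G H) : FinPartialIso H G where
  graph := p.graph.map (Equiv.prodComm α β).toEmbedding
  isPartialIso := by
    simp only [Finset.mem_map_equiv]
    intro r hr r' hr'
    exact ⟨(p.fst_eq_iff hr hr').symm, (p.adj_iff hr hr').symm⟩

@[simp] lemma mem_symm {r : β × α} : r ∈ p.symm ↔ r.swap ∈ p := Finset.mem_map_equiv

def map (p : FinPartialIso G H) (φ : G ≃g G') (ψ : H ≃g H') : FinPartialIso G' H' where
  graph := p.graph.map (φ.toEquiv.prodCongr ψ.toEquiv).toEmbedding
  isPartialIso := by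
    simp only [Finset.mem_map_equiv]
    intro r hr r' hr'
    obtain ⟨h₁, h₂⟩ := p.isPartialIso _ hr _ hr'
    simp only [Equiv.prodCongr_symm, Equiv.prodCongr_apply, Prod.map_fst, Prod.map_snd] at h₁ h₂
    exact ⟨by simpa using h₁, (φ.symm.map_rel_iff.symm.trans h₂).trans ψ.symm.map_rel_iff⟩

@[simp] lemma mem_map {p : FinPartialIso G H} {φ : G ≃g G'} {ψ : H ≃g H'} {r : α' × β'} :
    r ∈ p.map φ ψ ↔ (φ.symm r.1, ψ.symm r.2) ∈ p := Finset.mem_map_equiv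

@[simp] lemma dom_insert : (p.insert a b h).dom = Insert.insert a p.dom := by
  ext; simp [exists_or]

@[simp] lemma ran_insert : (p.insert a b h).ran = Insert.insert b p.ran := by
  ext; simp [exists_or]

lemma compatible_symm : p.symm.Compatible b a ↔ p.Compatible a b := by
  simp only [Compatible, Prod.forall, mem_symm, Prod.swap_prod_mk]
  exact ⟨fun h x y hxy => (h y x hxy).imp Iff.symm Iff.symm,
    fun h x y hxy => (h y x hxy).imp Iff.symm Iff.symm⟩

lemma exists_compatible (hH : H.HasPropR) (p : FinPartialIso G H) (a : α) :
    ∃ b, p.Compatible a b := by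
  by_cases ha : a ∈ p.dom
  · obtain ⟨b, hab⟩ := mem_dom.1 ha
    exact ⟨b, fun r hr => p.isPartialIso (a, b) hab r hr⟩
  let U := (p.graph.filter fun r => G.Adj a r.1).image Prod.snd
  let W := (p.graph.filter fun r => ¬ G.Adj a r.1).image Prod.snd
  have hUW : Disjoint U W := by
    simp only [U, W, Finset.disjoint_left, Finset.mem_image, Finset.mem_filter]
    rintro _ ⟨r, ⟨hr, hadj⟩, rfl⟩ ⟨r', ⟨hr', hnadj⟩, hrr'⟩
    exact hnadj ((p.fst_eq_iff hr' hr).2 hrr' ▸ hadj)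
  obtain ⟨z, hzU, hzW, hU, hW⟩ := hH U W hUW
  have hmem : ∀ r ∈ p, (G.Adj a r.1 → r.2 ∈ U) ∧ (¬ G.Adj a r.1 → r.2 ∈ W) := fun r hr =>
    ⟨fun h => Finset.mem_image_of_mem _ (Finset.mem_filter.2 ⟨hr, h⟩),
      fun h => Finset.mem_image_of_mem _ (Finset.mem_filter.2 ⟨hr, h⟩)⟩
  refine ⟨z, compatible_of_notMem ha ?_ fun r hr => ?_⟩
  · rintro hz
    obtain ⟨a', ha'⟩ := mem_ran.1 hz
    by_cases h : G.Adj a a'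
    · exact hzU ((hmem _ ha').1 h)
    · exact hzW ((hmem _ ha').2 h)
  · by_cases h : G.Adj a r.1
    · exact iff_of_true h (hU _ ((hmem r hr).1 h))
    · exact iff_of_false h (hW _ ((hmem r hr).2 h))

lemma isCofinal_mem_dom (hH : H.HasPropR) (a : α) :
    IsCofinal {p : FinPartialIso G H | ∃ b, (a, b) ∈ p} := fun p => by
  obtain ⟨b, h⟩ := exists_compatible hH p a
  exact ⟨p.insert a b h, ⟨b, mem_insert_self⟩, le_insert⟩

lemma isCofinal_mem_ran (hG : G.HasPropR) (b : β) :
    IsCofinal {p : FinPartialIso G H | ∃ a, (a, b) ∈ p} := fun p => by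
  obtain ⟨a, h⟩ := exists_compatible hG p.symm b
  rw [compatible_symm] at h
  exact ⟨p.insert a b h, ⟨a, mem_insert_self⟩, le_insert⟩

def Extends (e : G ≃g H) (p : FinPartialIso G H) : Prop := ∀ r ∈ p, e r.1 = r.2

lemma Extends.mono {e : G ≃g H} (he : Extends e q) (hpq : p ≤ q) : Extends e p :=
  fun r hr => he r (hpq hr)

lemma Extends.symm_apply {e : G ≃g H} (he : Extends e p) (hr : r ∈ p) : e.symm r.2 = r.1 := by
  rw [← he r hr, RelIso.symm_apply_apply]

lemma exists_iso_of_monotone (f : ℕ → FinPartialIso G H) (hf : Monotone f)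
    (hdom : ∀ a, ∃ n b, (a, b) ∈ f n) (hran : ∀ b, ∃ n a, (a, b) ∈ f n) :
    ∃ e : G ≃g H, ∀ n, Extends e (f n) := by
  have key : ∀ n m r r', r ∈ f n → r' ∈ f m →
      (r.1 = r'.1 ↔ r.2 = r'.2) ∧ (G.Adj r.1 r'.1 ↔ H.Adj r.2 r'.2) := fun n m r r' hr hr' =>
    (f (max n m)).isPartialIso r (hf (le_max_left n m) hr) r' (hf (le_max_right n m) hr')
  choose nF F hF using hdom
  have hinj : Function.Injective F := fun a a' h =>
    (key _ _ _ _ (hF a) (hF a')).1.2 h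
  have hsurj : Function.Surjective F := fun b => by
    obtain ⟨n, a, hab⟩ := hran b
    exact ⟨a, (key _ _ _ _ (hF a) hab).1.1 rfl⟩
  refine ⟨⟨Equiv.ofBijective F ⟨hinj, hsurj⟩, fun {a a'} =>
    (key _ _ _ _ (hF a) (hF a')).2.symm⟩, fun n r hr => ?_⟩
  exact (key _ _ _ _ (hF r.1) hr).1.1 rfl

/-- The union of a Rasiowa–Sikorski sequence meeting the back-and-forth requirements and the
sets `D i`. -/
theorem exists_iso_forall_extends [Countable α] [Countable β] (hG : G.HasPropR)
    (hH : H.HasPropR) {ι : Type*} [Countable ι] (D : ι → Set (FinPartialIso G H))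
    (hD : ∀ i, IsCofinal (D i)) : ∃ e : G ≃g H, ∀ i, ∃ p ∈ D i, Extends e p := by
  let _ := Encodable.ofCountable (α ⊕ β ⊕ ι)
  let 𝒟 : α ⊕ β ⊕ ι → Order.Cofinal (FinPartialIso G H)
    | .inl a => ⟨_, isCofinal_mem_dom hH a⟩
    | .inr (.inl b) => ⟨_, isCofinal_mem_ran hG b⟩
    | .inr (.inr i) => ⟨D i, hD i⟩
  let f := Order.sequenceOfCofinals default 𝒟
  have hf (j) : f (Encodable.encode j + 1) ∈ 𝒟 j := Order.sequenceOfCofinals.encode_mem _ _ j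
  obtain ⟨e, he⟩ := exists_iso_of_monotone f (Order.sequenceOfCofinals.monotone _ _)
    (fun a => ⟨_, hf (.inl a)⟩) (fun b => ⟨_, hf (.inr (.inl b))⟩)
  exact ⟨e, fun i => ⟨_, hf (.inr (.inr i)), he _⟩⟩

end FinPartialIso

theorem HasPropR.nonempty_iso [Countable α] [Countable β] (hG : G.HasPropR)
    (hH : H.HasPropR) : Nonempty (G ≃g H) :=
  let ⟨e, _⟩ := FinPartialIso.exists_iso_forall_extends hG hH (ι := Empty) (fun _ => ∅) nofun
  ⟨e⟩

end SimpleGraph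

open SimpleGraph

theorem IsHomogeneousAction.of_forall_finPartialIso {Γ V : Type*} [Group Γ] {G : SimpleGraph V}
    (ρ : Γ →* (G ≃g G)) (h : ∀ S : G.FinPartialIso G, ∃ g, ∀ r ∈ S, ρ g r.1 = r.2) :
    IsHomogeneousAction G ρ := by
  intro A φ hinj hadj
  let S : G.FinPartialIso G := ⟨A.image fun u => (u, φ u), by
    simp only [Finset.mem_image]
    rintro _ ⟨u, hu, rfl⟩ _ ⟨v, hv, rfl⟩
    exact ⟨⟨congrArg φ, fun h => hinj hu hv h⟩, hadj u hu v hv⟩⟩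
  obtain ⟨g, hg⟩ := h S
  exact ⟨g, fun u hu => hg (u, φ u) (Finset.mem_image_of_mem _ hu)⟩

@[ext] structure RadoVertex (Γ : Type*) where
  elem : Γ
  level : ℕ
  code : Finset ℕ

namespace RadoVertex

variable {Γ : Type*}

def equivProd : RadoVertex Γ ≃ Γ × ℕ × Finset ℕ where
  toFun x := (x.elem, x.level, x.code)
  invFun x := ⟨x.1, x.2.1, x.2.2⟩
  left_inv _ := rfl
  right_inv _ := rfl

instance [Encodable Γ] : Encodable (RadoVertex Γ) := Encodable.ofEquiv _ equivProd

variable [Group Γ]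

instance : SMul Γ (RadoVertex Γ) := ⟨fun g x => ⟨g * x.elem, x.level, x.code⟩⟩

variable (g : Γ) (x : RadoVertex Γ)

@[simp] lemma smul_elem : (g • x).elem = g * x.elem := rfl
@[simp] lemma smul_level : (g • x).level = x.level := rfl
@[simp] lemma smul_code : (g • x).code = x.code := rfl

instance : MulAction Γ (RadoVertex Γ) where
  one_smul x := RadoVertex.ext (one_mul x.elem) rfl rfl
  mul_smul g g' x := RadoVertex.ext (mul_assoc g g' x.elem) rfl rfl

lemma smul_left_injective : Function.Injective (· • x : Γ → RadoVertex Γ) :=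
  fun _ _ h => mul_right_cancel (congrArg elem h)

@[simp] lemma smul_eq_self_iff {g : Γ} {x : RadoVertex Γ} : g • x = x ↔ g = 1 :=
  (smul_left_injective x).eq_iff' (one_smul Γ x)

end RadoVertex

open Encodable

/-- A vertex is adjacent to those vertices of lower level whose position relative to its own
group coordinate is listed in its `code`; relative positions make the translation action of
`Γ` preserve adjacency. -/
def radoGraph (Γ : Type*) [Group Γ] [Encodable Γ] : SimpleGraph (RadoVertex Γ) where
  Adj x y := (x.level < y.level ∧ encode (y.elem⁻¹ • x) ∈ y.code) ∨
    (y.level < x.level ∧ encode (x.elem⁻¹ • y) ∈ x.code)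
  symm := ⟨fun _ _ => Or.symm⟩
  loopless := ⟨fun _ h => by rcases h with ⟨h, -⟩ | ⟨h, -⟩ <;> exact lt_irrefl _ h⟩

namespace radoGraph

variable {Γ : Type*} [Group Γ] [Encodable Γ]

lemma adj_iff {x y : RadoVertex Γ} : (radoGraph Γ).Adj x y ↔
    (x.level < y.level ∧ encode (y.elem⁻¹ • x) ∈ y.code) ∨
    (y.level < x.level ∧ encode (x.elem⁻¹ • y) ∈ x.code) := Iff.rfl

lemma not_adj_of_level_eq {x y : RadoVertex Γ} (h : x.level = y.level) :
    ¬ (radoGraph Γ).Adj x y := by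
  rw [adj_iff]; omega

lemma adj_smul (g : Γ) (x y : RadoVertex Γ) :
    (radoGraph Γ).Adj (g • x) (g • y) ↔ (radoGraph Γ).Adj x y := by
  have (x y : RadoVertex Γ) : (g • y).elem⁻¹ • g • x = y.elem⁻¹ • x := by
    rw [smul_smul, RadoVertex.smul_elem, mul_inv_rev, inv_mul_cancel_right]
  simp only [adj_iff, this, RadoVertex.smul_level, RadoVertex.smul_code]

lemma exists_adj_iff (T : Finset (RadoVertex Γ)) (P : RadoVertex Γ → Prop) {B : ℕ}
    (hT : ∀ t ∈ T, t.level ≤ B) :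
    ∃ z : RadoVertex Γ, z.level = B + 1 ∧ ∀ t ∈ T, ((radoGraph Γ).Adj z t ↔ P t) := by
  refine ⟨⟨1, B + 1, (T.filter P).image encode⟩, rfl, fun t ht => ?_⟩
  have hlt : t.level < B + 1 := Nat.lt_succ_of_le (hT t ht)
  simp [adj_iff, hlt, ht, hlt.not_gt]

theorem hasPropR : (radoGraph Γ).HasPropR := by
  intro U W hUW
  obtain ⟨z, hz, hzadj⟩ := exists_adj_iff (U ∪ W) (· ∈ U)
    (fun t ht => Finset.le_sup (f := RadoVertex.level) ht)
  have hzUW : z ∉ U ∪ W := fun h => by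
    have := Finset.le_sup (f := RadoVertex.level) h
    omega
  refine ⟨z, fun h => hzUW (Finset.mem_union_left _ h), fun h => hzUW (Finset.mem_union_right _ h),
    fun u hu => (hzadj u (Finset.mem_union_left _ hu)).2 hu, fun w hw h => ?_⟩
  exact Finset.disjoint_left.1 hUW ((hzadj w (Finset.mem_union_right _ hw)).1 h) hw

lemma finite_setOf_adj_smul (x y : RadoVertex Γ) :
    {g : Γ | (radoGraph Γ).Adj y (g • x)}.Finite := by
  have hinj₁ : Function.Injective fun g : Γ => encode ((g • x).elem⁻¹ • y) := fun g g' h => by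
    simpa using RadoVertex.smul_left_injective y (encode_injective h)
  have hinj₂ : Function.Injective fun g : Γ => encode (y.elem⁻¹ • g • x) := fun g g' h => by
    simpa [smul_smul] using RadoVertex.smul_left_injective x
      (smul_left_cancel _ (encode_injective h) : g • x = g' • x)
  refine ((x.code.finite_toSet.preimage hinj₁.injOn).union
    (y.code.finite_toSet.preimage hinj₂.injOn)).subset ?_
  rintro g (⟨-, h⟩ | ⟨-, h⟩)
  · exact .inl h
  · exact .inr h

lemma exists_smul_separated [Infinite Γ] (X Y : Finset (RadoVertex Γ)) {F : Set Γ}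
    (hF : F.Finite) :
    ∃ g ∉ F, ∀ x ∈ X, ∀ y ∈ Y, g • x ≠ y ∧ ¬ (radoGraph Γ).Adj y (g • x) := by
  have hbad : {g : Γ | ∃ x ∈ X, ∃ y ∈ Y, g • x = y ∨ (radoGraph Γ).Adj y (g • x)}.Finite := by
    have : {g : Γ | ∃ x ∈ X, ∃ y ∈ Y, g • x = y ∨ (radoGraph Γ).Adj y (g • x)} =
        ⋃ x ∈ X, ⋃ y ∈ Y, ({g | g • x = y} ∪ {g | (radoGraph Γ).Adj y (g • x)}) := by
      ext; simp
    rw [this]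
    refine X.finite_toSet.biUnion fun x _ => Y.finite_toSet.biUnion fun y _ => .union ?_
      (finite_setOf_adj_smul x y)
    exact Set.Subsingleton.finite fun g hg g' hg' =>
      RadoVertex.smul_left_injective x (hg.trans hg'.symm)
  obtain ⟨g, hg⟩ := (hF.union hbad).infinite_compl.nonempty
  simp only [Set.mem_compl_iff, Set.mem_union, Set.mem_ofPred_eq, not_or, not_exists,
    not_and] at hg
  exact ⟨g, hg.1, fun x hx y hy => hg.2 x hx y hy⟩

end radoGraph

section TwistedAction

variable {Γ₁ Γ₂ : Type*} [Group Γ₁] [Group Γ₂] [Encodable Γ₁] [Encodable Γ₂]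

def twistedAction (e : radoGraph Γ₂ ≃g radoGraph Γ₁) :
    Coprod Γ₁ Γ₂ →* (radoGraph Γ₁ ≃g radoGraph Γ₁) :=
  Coprod.lift (autOfSMul _ radoGraph.adj_smul)
    (e.autCongr.toMonoidHom.comp (autOfSMul _ radoGraph.adj_smul))

variable (e : radoGraph Γ₂ ≃g radoGraph Γ₁) (x : RadoVertex Γ₁)

@[simp] lemma twistedAction_inl (g : Γ₁) : twistedAction e (Coprod.inl g) x = g • x := rfl

@[simp] lemma twistedAction_inr (k : Γ₂) :
    twistedAction e (Coprod.inr k) x = e (k • e.symm x) := rfl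

@[simp] lemma twistedAction_mul (γ δ : Coprod Γ₁ Γ₂) :
    twistedAction e (γ * δ) x = twistedAction e γ (twistedAction e δ x) := by
  rw [map_mul]; rfl

end TwistedAction

/-- Reduced words of `Γ₁ ∗ Γ₂`; the index records whether the first letter lies in `Γ₁`. -/
inductive ReducedWord (Γ₁ Γ₂ : Type*) [One Γ₁] [One Γ₂] : Bool → Type _
  | left (g : Γ₁) : g ≠ 1 → ReducedWord Γ₁ Γ₂ true
  | right (k : Γ₂) : k ≠ 1 → ReducedWord Γ₁ Γ₂ false
  | consLeft (g : Γ₁) : g ≠ 1 → ReducedWord Γ₁ Γ₂ false → ReducedWord Γ₁ Γ₂ true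
  | consRight (k : Γ₂) : k ≠ 1 → ReducedWord Γ₁ Γ₂ true → ReducedWord Γ₁ Γ₂ false

namespace ReducedWord

variable {Γ₁ Γ₂ : Type*} [Group Γ₁] [Group Γ₂]

def prod : ∀ {b}, ReducedWord Γ₁ Γ₂ b → Coprod Γ₁ Γ₂
  | _, left g _ => Coprod.inl g
  | _, right k _ => Coprod.inr k
  | _, consLeft g _ w => Coprod.inl g * w.prod
  | _, consRight k _ w => Coprod.inr k * w.prod

lemma eq_one_or_exists_prod_eq_inl_mul (g : Γ₁) {b} (w : ReducedWord Γ₁ Γ₂ b) :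
    Coprod.inl g * w.prod = 1 ∨
      ∃ (b' : Bool) (w' : ReducedWord Γ₁ Γ₂ b'), w'.prod = Coprod.inl g * w.prod := by
  by_cases hg : g = 1
  · exact .inr ⟨b, w, by simp [hg]⟩
  cases w with
  | left g' _ =>
    by_cases h : g * g' = 1
    · left; simp [prod, ← map_mul, h]
    · exact .inr ⟨_, left _ h, by simp [prod]⟩
  | consLeft g' _ w =>
    by_cases h : g * g' = 1
    · exact .inr ⟨_, w, by simp [prod, ← mul_assoc, ← map_mul, h]⟩
    · exact .inr ⟨_, consLeft _ h w, by simp [prod, mul_assoc]⟩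
  | right k hk => exact .inr ⟨_, consLeft g hg (right k hk), rfl⟩
  | consRight k hk w => exact .inr ⟨_, consLeft g hg (consRight k hk w), rfl⟩

lemma eq_one_or_exists_prod_eq_inr_mul (k : Γ₂) {b} (w : ReducedWord Γ₁ Γ₂ b) :
    Coprod.inr k * w.prod = 1 ∨
      ∃ (b' : Bool) (w' : ReducedWord Γ₁ Γ₂ b'), w'.prod = Coprod.inr k * w.prod := by
  by_cases hk : k = 1
  · exact .inr ⟨b, w, by simp [hk]⟩
  cases w with
  | right k' _ =>
    by_cases h : k * k' = 1
    · left; simp [prod, ← map_mul, h]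
    · exact .inr ⟨_, right _ h, by simp [prod]⟩
  | consRight k' _ w =>
    by_cases h : k * k' = 1
    · exact .inr ⟨_, w, by simp [prod, ← mul_assoc, ← map_mul, h]⟩
    · exact .inr ⟨_, consRight _ h w, by simp [prod, mul_assoc]⟩
  | left g hg => exact .inr ⟨_, consRight k hk (left g hg), rfl⟩
  | consLeft g hg w => exact .inr ⟨_, consRight k hk (consLeft g hg w), rfl⟩

theorem eq_one_or_exists_prod_eq (γ : Coprod Γ₁ Γ₂) :
    γ = 1 ∨ ∃ (b : Bool) (w : ReducedWord Γ₁ Γ₂ b), w.prod = γ := by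
  induction γ using Coprod.induction_on' with
  | one => exact .inl rfl
  | inl_mul g γ ih =>
    rcases ih with rfl | ⟨b, w, rfl⟩
    · by_cases hg : g = 1
      · simp [hg]
      · exact .inr ⟨_, left g hg, by simp [prod]⟩
    · exact eq_one_or_exists_prod_eq_inl_mul g w
  | inr_mul k γ ih =>
    rcases ih with rfl | ⟨b, w, rfl⟩
    · by_cases hk : k = 1
      · simp [hk]
      · exact .inr ⟨_, right k hk, by simp [prod]⟩
    · exact eq_one_or_exists_prod_eq_inr_mul k w

end ReducedWord

namespace SimpleGraph.FinPartialIso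

variable {α β Γ Γ' : Type*} {G : SimpleGraph α} {H : SimpleGraph β} {a : α} {b : β}
  [Group Γ] [Encodable Γ] [Group Γ'] [Encodable Γ']

lemma exists_compatible_level (p : FinPartialIso G (radoGraph Γ)) (ha : a ∉ p.dom) {B : ℕ}
    (hB : ∀ r ∈ p, r.2.level ≤ B) : ∃ b : RadoVertex Γ, b.level = B + 1 ∧ p.Compatible a b := by
  have hran : ∀ v ∈ p.ran, v.level ≤ B := fun v hv => by
    obtain ⟨a', h⟩ := mem_ran.1 hv
    exact hB _ h
  obtain ⟨b, hb, hadj⟩ :=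
    radoGraph.exists_adj_iff p.ran (fun v => ∃ a', (a', v) ∈ p ∧ G.Adj a a') hran
  refine ⟨b, hb, compatible_of_notMem ha (fun h => by have := hran b h; omega) fun r hr => ?_⟩
  rw [hadj r.2 (mem_ran.2 ⟨r.1, hr⟩)]
  refine ⟨fun h => ⟨r.1, hr, h⟩, ?_⟩
  rintro ⟨a', ha', h⟩
  obtain rfl : a' = r.1 := (p.fst_eq_iff ha' hr).2 rfl
  exact h

lemma exists_compatible_level_left (p : FinPartialIso (radoGraph Γ) H) (hb : b ∉ p.ran)
    {B : ℕ} (hB : ∀ r ∈ p, r.1.level ≤ B) :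
    ∃ a : RadoVertex Γ, a.level = B + 1 ∧ p.Compatible a b := by
  obtain ⟨a, ha, h⟩ := p.symm.exists_compatible_level (a := b) (by simpa using hb)
    fun r hr => hB _ (mem_symm.1 hr)
  exact ⟨a, ha, compatible_symm.1 h⟩

def LevelsLE (p : FinPartialIso (radoGraph Γ) (radoGraph Γ')) (B : ℕ) : Prop :=
  ∀ r ∈ p, r.1.level ≤ B ∧ r.2.level ≤ B

lemma LevelsLE.mono {p : FinPartialIso (radoGraph Γ) (radoGraph Γ')} {B B' : ℕ}
    (hp : p.LevelsLE B) (hB : B ≤ B') : p.LevelsLE B' :=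
  fun r hr => ⟨(hp r hr).1.trans hB, (hp r hr).2.trans hB⟩

lemma exists_levelsLE (p : FinPartialIso (radoGraph Γ) (radoGraph Γ')) : ∃ B, p.LevelsLE B :=
  ⟨p.graph.sup fun r => max r.1.level r.2.level, fun _ hr =>
    max_le_iff.1 (Finset.le_sup (f := fun r : RadoVertex Γ × RadoVertex Γ' =>
      max r.1.level r.2.level) hr)⟩

lemma LevelsLE.level_le_of_mem_dom {p : FinPartialIso (radoGraph Γ) (radoGraph Γ')} {B : ℕ}
    (hp : p.LevelsLE B) {t : RadoVertex Γ} (ht : t ∈ p.dom) : t.level ≤ B := by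
  obtain ⟨v, h⟩ := mem_dom.1 ht
  exact (hp _ h).1

def UniqueAtLevel (p : FinPartialIso G (radoGraph Γ)) (y : RadoVertex Γ) : Prop :=
  ∀ r ∈ p, r.2.level = y.level → r.2 = y

lemma UniqueAtLevel.smul_notMem_ran {p : FinPartialIso G (radoGraph Γ)} {y : RadoVertex Γ}
    (h : p.UniqueAtLevel y) {g : Γ} (hg : g ≠ 1) : g • y ∉ p.ran := fun hy => by
  obtain ⟨a, ha⟩ := mem_ran.1 hy
  exact hg (RadoVertex.smul_eq_self_iff.1 (h _ ha rfl))

end SimpleGraph.FinPartialIso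

section Forcing

open FinPartialIso

variable {Γ₁ Γ₂ : Type*} [Group Γ₁] [Group Γ₂] [Encodable Γ₁] [Encodable Γ₂]

/-- Send a fresh vertex `w` to `y`, then `k • w` to a fresh vertex `z`. -/
lemma exists_le_forall_extends_twistedAction_inr
    (p : FinPartialIso (radoGraph Γ₂) (radoGraph Γ₁)) {B : ℕ} (hp : p.LevelsLE B)
    {y : RadoVertex Γ₁} (hy : y ∉ p.ran) (hyB : y.level ≤ B) {k : Γ₂} (hk : k ≠ 1) :
    ∃ q ≥ p, ∃ z : RadoVertex Γ₁, q.LevelsLE (B + 2) ∧ z.level = B + 2 ∧ q.UniqueAtLevel z ∧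
      ∀ e, Extends e q → twistedAction e (Coprod.inr k) y = z := by
  obtain ⟨w, hw, h₁⟩ := p.exists_compatible_level_left hy fun r hr => (hp r hr).1
  have hkw : k • w ∉ (p.insert w y h₁).dom := by
    rw [dom_insert, Finset.mem_insert, RadoVertex.smul_eq_self_iff, not_or]
    exact ⟨hk, fun h => by
      have := hp.level_le_of_mem_dom h
      rw [RadoVertex.smul_level] at this
      omega⟩
  obtain ⟨z, hz, h₂⟩ := (p.insert w y h₁).exists_compatible_level hkw (B := B + 1) fun r hr => by
    rcases mem_insert.1 hr with rfl | hr
    · exact hyB.trans B.le_succ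
    · exact (hp r hr).2.trans B.le_succ
  refine ⟨(p.insert w y h₁).insert (k • w) z h₂, le_insert.trans le_insert, z, fun r hr => ?_, hz,
    fun r hr hrz => ?_, fun e he => ?_⟩
  · rcases mem_insert.1 hr with rfl | hr
    · simp only [RadoVertex.smul_level]; omega
    rcases mem_insert.1 hr with rfl | hr
    · dsimp only; omega
    · have := hp r hr; omega
  · rcases mem_insert.1 hr with rfl | hr
    · rfl
    rcases mem_insert.1 hr with rfl | hr
    · dsimp only at hrz; omega
    · have := hp r hr; omega
  · rw [twistedAction_inr, (he.mono le_insert).symm_apply (mem_insert_self (h := h₁))]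
    exact he _ mem_insert_self

namespace ReducedWord

/-- The `cond` clause is what lets the next letter act freshly: a `Γ₂`-letter needs a vertex
outside `ran q`, and a `Γ₁`-letter `g ≠ 1` moves a vertex alone on its level out of `ran q`. -/
lemma exists_le_forall_extends_twistedAction {b : Bool} (w : ReducedWord Γ₁ Γ₂ b)
    (p : FinPartialIso (radoGraph Γ₂) (radoGraph Γ₁)) {B : ℕ} (hp : p.LevelsLE B)
    {x : RadoVertex Γ₁} (hxB : x.level ≤ B) (hx : ∀ r ∈ p, r.2.level ≠ x.level) :
    ∃ q ≥ p, ∃ B' ≥ B, ∃ x', q.LevelsLE B' ∧ x'.level ≤ B' ∧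
      cond b (x' ∉ q.ran) (q.UniqueAtLevel x') ∧ x' ≠ x ∧ (b = false → x.level < x'.level) ∧
      ∀ e, Extends e q → twistedAction e w.prod x = x' := by
  induction w with
  | left g hg =>
    refine ⟨p, le_rfl, B, le_rfl, g • x, hp, hxB, fun h => ?_, by simpa using hg, nofun,
      fun e _ => rfl⟩
    obtain ⟨a, ha⟩ := mem_ran.1 h
    exact hx _ ha rfl
  | right k hk =>
    obtain ⟨q, hq, z, hqB, hz, hzq, hez⟩ := exists_le_forall_extends_twistedAction_inr p hp
      (fun h => by obtain ⟨a, ha⟩ := mem_ran.1 h; exact hx _ ha rfl) hxB hk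
    exact ⟨q, hq, B + 2, by omega, z, hqB, hz.le, hzq, fun h => by subst h; omega,
      fun _ => by omega, hez⟩
  | consLeft g hg w ih =>
    obtain ⟨q, hq, B', hB', x', hqB, hx'B, hx'q, -, hlt, heval⟩ := ih
    refine ⟨q, hq, B', hB', g • x', hqB, hx'B, UniqueAtLevel.smul_notMem_ran hx'q hg,
      fun h => ?_, nofun, fun e he => by simp [prod, heval e he]⟩
    have := congrArg RadoVertex.level h
    simp only [RadoVertex.smul_level] at this
    exact (hlt rfl).ne' this
  | consRight k hk w ih =>
    obtain ⟨q, hq, B', hB', x', hqB, hx'B, hx'q, -, -, heval⟩ := ih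
    obtain ⟨q', hq', z, hq'B, hz, hzq', hez⟩ :=
      exists_le_forall_extends_twistedAction_inr q hqB hx'q hx'B hk
    refine ⟨q', hq.trans hq', B' + 2, by omega, z, hq'B, hz.le, hzq', fun h => by subst h; omega,
      fun _ => by omega, fun e he => ?_⟩
    simp [prod, heval e (he.mono hq'), hez e he]

end ReducedWord

lemma isCofinal_twistedAction_ne (γ : Coprod Γ₁ Γ₂) :
    IsCofinal {p : FinPartialIso (radoGraph Γ₂) (radoGraph Γ₁) |
      γ = 1 ∨ ∃ x, ∀ e, Extends e p → twistedAction e γ x ≠ x} := by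
  intro p
  rcases ReducedWord.eq_one_or_exists_prod_eq γ with rfl | ⟨b, w, rfl⟩
  · exact ⟨p, .inl rfl, le_rfl⟩
  obtain ⟨B, hB⟩ := p.exists_levelsLE
  let x : RadoVertex Γ₁ := ⟨1, B + 1, ∅⟩
  obtain ⟨q, hq, -, -, x', -, -, -, hne, -, heval⟩ :=
    w.exists_le_forall_extends_twistedAction p (hB.mono B.le_succ) (x := x) le_rfl
      fun r hr => ((hB r hr).2.trans_lt B.lt_succ_self).ne
  exact ⟨q, .inr ⟨x, fun e he => (heval e he).trans_ne hne⟩, hq⟩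

/-- The invariant that allows a fresh vertex `w` to be sent to `q.1` and `k • w` to `q.2`, for
any `q ∈ P`. -/
def TwinCoherent (k : Γ₂) (P : FinPartialIso (radoGraph Γ₁) (radoGraph Γ₁))
    (p : FinPartialIso (radoGraph Γ₂) (radoGraph Γ₁)) : Prop :=
  ∀ q ∈ P, ∀ r ∈ p, ∀ r' ∈ p, r'.1 = k • r.1 →
    ((radoGraph Γ₁).Adj q.1 r.2 ↔ (radoGraph Γ₁).Adj q.2 r'.2)

lemma exists_compatible_twin (p : FinPartialIso (radoGraph Γ₂) (radoGraph Γ₁)) {B : ℕ}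
    (hB : ∀ t ∈ p.dom, t.level ≤ B) {a b : RadoVertex Γ₁} (ha : a ∉ p.ran) (hb : b ∉ p.ran)
    (hab : a ≠ b) (hnadj : ¬ (radoGraph Γ₁).Adj a b) {k : Γ₂} (hk : k ≠ 1)
    (hcoh : ∀ r ∈ p, ∀ r' ∈ p, r'.1 = k • r.1 →
      ((radoGraph Γ₁).Adj a r.2 ↔ (radoGraph Γ₁).Adj b r'.2)) :
    ∃ w : RadoVertex Γ₂, w.level = B + 1 ∧
      ∃ h : p.Compatible w a, (p.insert w a h).Compatible (k • w) b := by
  let ε t := (∃ r ∈ p, r.1 = t ∧ (radoGraph Γ₁).Adj a r.2) ∨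
    (∃ r' ∈ p, r'.1 = k • t ∧ (radoGraph Γ₁).Adj b r'.2)
  obtain ⟨w, hw, hadj⟩ := radoGraph.exists_adj_iff (p.dom ∪ p.dom.image (k⁻¹ • ·)) ε
    (B := B) fun t ht => by
      rcases Finset.mem_union.1 ht with ht | ht
      · exact hB t ht
      · obtain ⟨t', ht', rfl⟩ := Finset.mem_image.1 ht
        exact hB t' ht'
  have h₁ (r) (hr : r ∈ p) : (radoGraph Γ₂).Adj w r.1 ↔ (radoGraph Γ₁).Adj a r.2 := by
    rw [hadj r.1 (Finset.mem_union_left _ (mem_dom.2 ⟨_, hr⟩))]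
    refine ⟨?_, fun h => .inl ⟨r, hr, rfl, h⟩⟩
    rintro (⟨r₀, hr₀, h₀, h⟩ | ⟨r', hr', h', h⟩)
    · rwa [(p.fst_eq_iff hr₀ hr).1 h₀] at h
    · exact (hcoh r hr r' hr' h').2 h
  have h₂ (r') (hr' : r' ∈ p) : (radoGraph Γ₂).Adj (k • w) r'.1 ↔ (radoGraph Γ₁).Adj b r'.2 := by
    rw [← radoGraph.adj_smul k⁻¹, inv_smul_smul, hadj _ (Finset.mem_union_right _
      (Finset.mem_image_of_mem _ (mem_dom.2 ⟨_, hr'⟩)))]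
    refine ⟨?_, fun h => .inr ⟨r', hr', (smul_inv_smul k _).symm, h⟩⟩
    rintro (⟨r, hr, h₀, h⟩ | ⟨r₀, hr₀, h₀, h⟩)
    · exact (hcoh r hr r' hr' (by rw [h₀, smul_inv_smul])).1 h
    · rwa [(p.fst_eq_iff hr₀ hr').1 (by rw [h₀, smul_inv_smul])] at h
  have hw_dom : w ∉ p.dom := fun h => by have := hB w h; omega
  have hkw_dom : k • w ∉ p.dom := fun h => by
    have := hB _ h
    rw [RadoVertex.smul_level] at this
    omega
  refine ⟨w, hw, compatible_of_notMem hw_dom ha h₁, compatible_of_notMem ?_ ?_ ?_⟩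
  · simpa [hk] using hkw_dom
  · simpa [Ne.symm hab] using hb
  · intro r hr
    rcases mem_insert.1 hr with rfl | hr
    · exact iff_of_false (radoGraph.not_adj_of_level_eq rfl) fun h => hnadj h.symm
    · exact h₂ r hr

lemma TwinCoherent.insert_twin {k : Γ₂} {P : FinPartialIso (radoGraph Γ₁) (radoGraph Γ₁)}
    {p : FinPartialIso (radoGraph Γ₂) (radoGraph Γ₁)} (hcoh : TwinCoherent k P p) {B : ℕ}
    (hB : ∀ t ∈ p.dom, t.level ≤ B) (hk : k ≠ 1)
    (hsep : ∀ q ∈ P, ∀ q' ∈ P, ¬ (radoGraph Γ₁).Adj q.1 q'.2) {w : RadoVertex Γ₂}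
    (hw : w.level = B + 1) {a b : RadoVertex Γ₁} (hab : (a, b) ∈ P) (h₁ : p.Compatible w a)
    (h₂ : (p.insert w a h₁).Compatible (k • w) b) :
    TwinCoherent k P ((p.insert w a h₁).insert (k • w) b h₂) := by
  have hlevel (r) (hr : r ∈ p) : r.1.level ≤ B := hB _ (mem_dom.2 ⟨_, hr⟩)
  intro q hq r hr r' hr' hrr'
  have hl := congrArg RadoVertex.level hrr'
  simp only [mem_insert] at hr hr'
  rcases hr with rfl | rfl | hr <;> rcases hr' with rfl | rfl | hr' <;>
    simp only [RadoVertex.smul_level] at hl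
  · exact absurd (smul_left_cancel k hrr').symm (by simpa using hk)
  -- `k • k • w = w` happens when `k ^ 2 = 1`; both sides then fail by separation.
  · exact iff_of_false (hsep q hq _ hab) fun h => hsep _ hab q hq h.symm
  · have := hlevel _ hr'; omega
  · exact P.adj_iff hq hab
  · exact absurd hrr'.symm (by simpa using hk)
  · have := hlevel _ hr'; omega
  · have := hlevel _ hr; omega
  · have := hlevel _ hr; omega
  · exact hcoh q hq r hr r' hr' hrr'

lemma exists_le_twins (p : FinPartialIso (radoGraph Γ₂) (radoGraph Γ₁))
    (P : FinPartialIso (radoGraph Γ₁) (radoGraph Γ₁))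
    (hsep : ∀ q ∈ P, ∀ q' ∈ P, q.1 ≠ q'.2 ∧ ¬ (radoGraph Γ₁).Adj q.1 q'.2)
    (hfree : ∀ q ∈ P, q.1 ∉ p.ran ∧ q.2 ∉ p.ran) {k : Γ₂} (hk : k ≠ 1)
    (hkp : ∀ t ∈ p.dom, k • t ∉ p.dom) :
    ∃ p' ≥ p, ∀ q ∈ P, ∃ w, (w, q.1) ∈ p' ∧ (k • w, q.2) ∈ p' := by
  obtain ⟨B₀, hB₀⟩ := p.exists_levelsLE
  suffices ∀ T ⊆ P.graph, ∃ p' ≥ p, ∃ B, (∀ t ∈ p'.dom, t.level ≤ B) ∧ TwinCoherent k P p' ∧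
      (∀ q ∈ P, q ∉ T → q.1 ∉ p'.ran ∧ q.2 ∉ p'.ran) ∧
      ∀ q ∈ T, ∃ w, (w, q.1) ∈ p' ∧ (k • w, q.2) ∈ p' by
    obtain ⟨p', hp', -, -, -, -, h⟩ := this P.graph subset_rfl
    exact ⟨p', hp', h⟩
  intro T hT
  induction T using Finset.induction_on with
  | empty =>
    refine ⟨p, le_rfl, B₀, fun t => hB₀.level_le_of_mem_dom, ?_, fun q hq _ => hfree q hq, by simp⟩
    exact fun q _ r hr r' hr' h => absurd (mem_dom.2 ⟨_, hr'⟩)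
      (h ▸ hkp _ (mem_dom.2 ⟨_, hr⟩))
  | insert q T hqT ih =>
    obtain ⟨p', hp', B, hB, hcoh, hfree', hdone⟩ := ih ((Finset.subset_insert q T).trans hT)
    have hq : q ∈ P := hT (Finset.mem_insert_self q T)
    obtain ⟨w, hw, h₁, h₂⟩ := exists_compatible_twin p' hB (hfree' q hq hqT).1
      (hfree' q hq hqT).2 (hsep q hq q hq).1 (hsep q hq q hq).2 hk (hcoh q hq)
    refine ⟨_, hp'.trans (le_insert.trans le_insert), B + 1, fun t ht => ?_,
      hcoh.insert_twin hB hk (fun q hq q' hq' => (hsep q hq q' hq').2) hw hq h₁ h₂,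
      fun q' hq' hq'T => ?_, fun q' hq'T => ?_⟩
    · simp only [dom_insert, Finset.mem_insert] at ht
      rcases ht with rfl | rfl | ht
      · simp [hw]
      · omega
      · exact (hB t ht).trans B.le_succ
    · have hne : q' ≠ q := fun h => hq'T (h ▸ Finset.mem_insert_self q T)
      have h₁ : q'.1 ≠ q.1 := fun h => hne (Prod.ext h ((P.fst_eq_iff hq' hq).1 h))
      have h₂ : q'.2 ≠ q.2 := fun h => hne (Prod.ext ((P.fst_eq_iff hq' hq).2 h) h)
      have := hfree' q' hq' fun h => hq'T (Finset.mem_insert_of_mem h)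
      simp only [ran_insert, Finset.mem_insert, not_or]
      exact ⟨⟨(hsep q' hq' q hq).1, h₁, this.1⟩, ⟨h₂, fun h => (hsep q hq q' hq').1 h.symm, this.2⟩⟩
    · rcases Finset.mem_insert.1 hq'T with rfl | hq'T
      · exact ⟨w, le_insert (mem_insert_self (h := h₁)), mem_insert_self⟩
      · obtain ⟨w', h₁', h₂'⟩ := hdone q' hq'T
        exact ⟨w', le_insert (le_insert h₁'), le_insert (le_insert h₂')⟩

/-- With `k` moving `p.dom` off itself, `h` pulling the range of `S` away from its domain and
`g` moving both off `p.ran`, the element `(g * h)⁻¹ * k * g` can be forced to realise `S`. -/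
lemma isCofinal_twistedAction_eq [Infinite Γ₁] [Infinite Γ₂]
    (S : FinPartialIso (radoGraph Γ₁) (radoGraph Γ₁)) :
    IsCofinal {p : FinPartialIso (radoGraph Γ₂) (radoGraph Γ₁) |
      ∃ γ, ∀ e, Extends e p → ∀ r ∈ S, twistedAction e γ r.1 = r.2} := by
  intro p
  obtain ⟨k, hk₁, hk⟩ := radoGraph.exists_smul_separated p.dom p.dom (Set.finite_singleton 1)
  obtain ⟨h, -, hh⟩ := radoGraph.exists_smul_separated S.ran S.dom (Set.finite_empty (α := Γ₁))
  obtain ⟨g, -, hg⟩ := radoGraph.exists_smul_separated (S.dom ∪ S.ran.image (h • ·)) p.ran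
    (Set.finite_empty (α := Γ₁))
  let τ := autOfSMul (radoGraph Γ₁) radoGraph.adj_smul
  have hsep : ∀ q ∈ S.map (τ g) (τ (g * h)), ∀ q' ∈ S.map (τ g) (τ (g * h)),
      q.1 ≠ q'.2 ∧ ¬ (radoGraph Γ₁).Adj q.1 q'.2 := by
    intro q hq q' hq'
    rw [mem_map] at hq hq'
    obtain ⟨hne, hnadj⟩ := hh _ (mem_ran.2 ⟨_, hq'⟩) _ (mem_dom.2 ⟨_, hq⟩)
    simp only [τ, autOfSMul_symm_apply, smul_smul, mul_inv_rev, mul_inv_cancel_left] at hne hnadj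
    rw [← radoGraph.adj_smul g⁻¹]
    exact ⟨fun h => hne (by rw [h]), hnadj⟩
  have hfree : ∀ q ∈ S.map (τ g) (τ (g * h)), q.1 ∉ p.ran ∧ q.2 ∉ p.ran := by
    intro q hq
    rw [mem_map] at hq
    have hu : g⁻¹ • q.1 ∈ S.dom ∪ S.ran.image (h • ·) :=
      Finset.mem_union_left _ (mem_dom.2 ⟨_, hq⟩)
    have hx : h • (g * h)⁻¹ • q.2 ∈ S.dom ∪ S.ran.image (h • ·) :=
      Finset.mem_union_right _ (Finset.mem_image_of_mem _ (mem_ran.2 ⟨_, hq⟩))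
    refine ⟨fun hmem => (hg _ hu _ hmem).1 ?_, fun hmem => (hg _ hx _ hmem).1 ?_⟩
    · simp
    · simp [smul_smul]
  obtain ⟨p', hp', hw⟩ := exists_le_twins p _ hsep hfree hk₁
    fun t ht ht' => (hk t ht _ ht').1 rfl
  refine ⟨p', ⟨Coprod.inl (g * h)⁻¹ * Coprod.inr k * Coprod.inl g, fun e he r hr => ?_⟩, hp'⟩
  obtain ⟨w, hw₁, hw₂⟩ := hw (g • r.1, (g * h) • r.2)
    (mem_map.2 (by simpa only [τ, autOfSMul_symm_apply, inv_smul_smul] using hr))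
  have hw₁ : e.symm (g • r.1) = w := he.symm_apply hw₁
  rw [twistedAction_mul, twistedAction_mul, twistedAction_inl, twistedAction_inr,
    twistedAction_inl, hw₁, he _ hw₂, inv_smul_smul]

end Forcing

open FinPartialIso

/-- The free product of two countably infinite groups admits a faithful homogeneous
action on any countable graph with property (R). -/
theorem freeProduct_inftyInfty_homogeneous {Γ₁ Γ₂ : Type*} [Group Γ₁] [Group Γ₂]
    [Countable Γ₁] [Countable Γ₂] [Infinite Γ₁] [Infinite Γ₂]
    {V : Type*} [Countable V] (R : SimpleGraph V) (hR : R.HasPropR) :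
    ∃ ρ : Monoid.Coprod Γ₁ Γ₂ →* (R ≃g R),
      Function.Injective ρ ∧ IsHomogeneousAction R ρ := by
  let _ := Encodable.ofCountable Γ₁
  let _ := Encodable.ofCountable Γ₂
  have : Countable (Coprod Γ₁ Γ₂) :=
    (Coprod.mk_surjective.comp FreeMonoid.ofList.surjective).countable
  obtain ⟨e, he⟩ := exists_iso_forall_extends (radoGraph.hasPropR (Γ := Γ₂))
    (radoGraph.hasPropR (Γ := Γ₁))
    (Sum.elim
      (fun γ : Coprod Γ₁ Γ₂ => {p | γ = 1 ∨ ∃ x, ∀ e, Extends e p → twistedAction e γ x ≠ x})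
      fun S : FinPartialIso (radoGraph Γ₁) (radoGraph Γ₁) =>
        {p | ∃ γ, ∀ e, Extends e p → ∀ r ∈ S, twistedAction e γ r.1 = r.2})
    (Sum.rec isCofinal_twistedAction_ne isCofinal_twistedAction_eq)
  obtain ⟨Ψ⟩ := (radoGraph.hasPropR (Γ := Γ₁)).nonempty_iso hR
  refine ⟨Ψ.autCongr.toMonoidHom.comp (twistedAction e), Ψ.autCongr.injective.comp ?_, ?_⟩
  · refine (injective_iff_map_eq_one _).2 fun γ hγ => ?_
    obtain ⟨p, hp | ⟨x, hx⟩, hep⟩ := he (.inl γ)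
    · exact hp
    · exact absurd (by rw [hγ]; rfl) (hx e hep)
  · refine IsHomogeneousAction.of_forall_finPartialIso _ fun S => ?_
    obtain ⟨p, ⟨γ, hγ⟩, hep⟩ := he (.inr (S.map Ψ.symm Ψ.symm))
    refine ⟨γ, fun r hr => ?_⟩
    have := hγ e hep (Ψ.symm r.1, Ψ.symm r.2) (mem_map.2 (by simpa using hr))
    simp [this]
end
end

section
/- If Γ₁ is a countably infinite group and Γ₂ is a finite group with at least two elements, then the free product Γ₁ * Γ₂ admits a faithful homogeneous action by automorphisms on any countable simple graph with property (R). -/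
open Function

namespace SimpleGraph.HasPropR

variable {V : Type*} {G : SimpleGraph V}

theorem exists_adj_iff (hG : G.HasPropR) (C : Finset V) (p : V → Prop) :
    ∃ z, z ∉ C ∧ ∀ c ∈ C, G.Adj z c ↔ p c := by
  classical
  obtain ⟨z, hzU, hzW, hadj, hnadj⟩ := hG (C.filter p) (C \ C.filter p) Finset.disjoint_sdiff
  refine ⟨z, fun hz => hzW (Finset.mem_sdiff.2 ⟨hz, hzU⟩), fun c hc => ⟨fun h => ?_,
    fun h => hadj c (Finset.mem_filter.2 ⟨hc, h⟩)⟩⟩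
  by_contra hc'
  exact hnadj c (Finset.mem_sdiff.2 ⟨hc, fun h => hc' (Finset.mem_filter.1 h).2⟩) h

theorem exists_extension_step (hG : G.HasPropR) {ι : Type*} (H : SimpleGraph ι) (C : Finset V)
    (p : ι → V → Prop) {s : Finset ι} {z : ι → V} (hinj : Set.InjOn z s)
    (hzC : ∀ j ∈ s, z j ∉ C) (a : ι) :
    ∃ w, w ∉ C ∧ (∀ c ∈ C, G.Adj w c ↔ p a c) ∧ ∀ j ∈ s, w ≠ z j ∧ (G.Adj w (z j) ↔ H.Adj a j) := by
  classical
  obtain ⟨w, hwC, hw⟩ := hG.exists_adj_iff (C ∪ s.image z)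
    fun c => if c ∈ C then p a c else ∃ j ∈ s, z j = c ∧ H.Adj a j
  refine ⟨w, fun h => hwC (Finset.mem_union_left _ h),
    fun c hc => by rw [hw c (Finset.mem_union_left _ hc), if_pos hc], fun j hj => ⟨fun h => ?_, ?_⟩⟩
  · exact hwC (Finset.mem_union_right _ (Finset.mem_image.2 ⟨j, hj, h.symm⟩))
  · rw [hw _ (Finset.mem_union_right _ (Finset.mem_image_of_mem _ hj)), if_neg (hzC j hj)]
    exact ⟨fun ⟨k, hk, hkj, hak⟩ => hinj hk hj hkj ▸ hak, fun h => ⟨j, hj, rfl, h⟩⟩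

theorem exists_extension_on (hG : G.HasPropR) {ι : Type*} [DecidableEq ι] (H : SimpleGraph ι)
    (C : Finset V) (p : ι → V → Prop) (s : Finset ι) :
    ∃ z : ι → V, Set.InjOn z s ∧ ∀ i ∈ s, z i ∉ C ∧ (∀ c ∈ C, G.Adj (z i) c ↔ p i c) ∧
      ∀ j ∈ s, G.Adj (z i) (z j) ↔ H.Adj i j := by
  induction s using Finset.induction_on with
  | empty =>
    obtain ⟨v, -⟩ := hG.exists_adj_iff ∅ fun _ => False
    exact ⟨fun _ => v, by simp, by simp⟩
  | insert a s ha ih =>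
    obtain ⟨z, hinj, hz⟩ := ih
    obtain ⟨w, hwC, hwp, hw⟩ := hG.exists_extension_step H C p hinj (fun j hj => (hz j hj).1) a
    have hupd : ∀ j ∈ s, update z a w j = z j := fun j hj =>
      update_of_ne (by rintro rfl; exact ha hj) _ _
    refine ⟨update z a w, ?_, fun i hi => ?_⟩
    · intro i hi j hj hij
      simp only [Finset.coe_insert, Set.mem_insert_iff, Finset.mem_coe] at hi hj
      rcases hi with rfl | hi <;> rcases hj with rfl | hj
      · rfl
      · rw [update_self, hupd j hj] at hij; exact absurd hij (hw j hj).1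
      · rw [update_self, hupd i hi] at hij; exact absurd hij.symm (hw i hi).1
      · rw [hupd i hi, hupd j hj] at hij; exact hinj hi hj hij
    rcases Finset.mem_insert.1 hi with rfl | hi'
    · refine ⟨by rwa [update_self], by rwa [update_self], fun j hj => ?_⟩
      rcases Finset.mem_insert.1 hj with rfl | hj
      · simp
      · rw [update_self, hupd j hj]; exact (hw j hj).2
    · rw [hupd i hi']
      refine ⟨(hz i hi').1, (hz i hi').2.1, fun j hj => ?_⟩
      rcases Finset.mem_insert.1 hj with rfl | hj
      · rw [update_self, G.adj_comm, H.adj_comm]; exact (hw i hi').2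
      · rw [hupd j hj]; exact (hz i hi').2.2 j hj

theorem exists_extension (hG : G.HasPropR) {ι : Type*} [Finite ι] (H : SimpleGraph ι)
    (C : Finset V) (p : ι → V → Prop) :
    ∃ z : ι → V, Injective z ∧ ∀ i, z i ∉ C ∧ (∀ c ∈ C, G.Adj (z i) c ↔ p i c) ∧
      ∀ j, G.Adj (z i) (z j) ↔ H.Adj i j := by
  classical
  have := Fintype.ofFinite ι
  obtain ⟨z, hinj, hz⟩ := hG.exists_extension_on H C p Finset.univ
  exact ⟨z, fun i j h => hinj (by simp) (by simp) h,
    fun i => ⟨(hz i (by simp)).1, (hz i (by simp)).2.1, fun j => (hz i (by simp)).2.2 j (by simp)⟩⟩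

end SimpleGraph.HasPropR

section PartialIso

variable {α β : Type*} {G : SimpleGraph α} {H : SimpleGraph β}

variable (G H) in
def IsPartialIso (P : Finset (α × β)) : Prop :=
  ∀ p ∈ P, ∀ q ∈ P, (p.1 = q.1 ↔ p.2 = q.2) ∧ (G.Adj p.1 q.1 ↔ H.Adj p.2 q.2)

theorem IsPartialIso.union [DecidableEq α] [DecidableEq β] {P Q : Finset (α × β)}
    (hP : IsPartialIso G H P) (hQ : IsPartialIso G H Q)
    (hPQ : ∀ p ∈ P, ∀ q ∈ Q, (p.1 = q.1 ↔ p.2 = q.2) ∧ (G.Adj p.1 q.1 ↔ H.Adj p.2 q.2)) :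
    IsPartialIso G H (P ∪ Q) := by
  intro p hp q hq
  rcases Finset.mem_union.1 hp with hp | hp <;> rcases Finset.mem_union.1 hq with hq | hq
  · exact hP p hp q hq
  · exact hPQ p hp q hq
  · rw [eq_comm, @eq_comm _ p.2, G.adj_comm, H.adj_comm]
    exact hPQ q hq p hp
  · exact hQ p hp q hq

theorem isPartialIso_singleton (p : α × β) : IsPartialIso G H {p} := by
  simp [IsPartialIso]

theorem IsPartialIso.union_of_separated [DecidableEq α] [DecidableEq β] {P Q : Finset (α × β)}
    (hP : IsPartialIso G H P) (hQ : IsPartialIso G H Q)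
    (h₁ : ∀ q ∈ Q, ∀ p ∈ P, q.1 ≠ p.1 ∧ ¬ G.Adj q.1 p.1)
    (h₂ : ∀ q ∈ Q, ∀ p ∈ P, q.2 ≠ p.2 ∧ ¬ H.Adj q.2 p.2) : IsPartialIso G H (P ∪ Q) :=
  hP.union hQ fun p hp q hq =>
    ⟨iff_of_false (h₁ q hq p hp).1.symm (h₂ q hq p hp).1.symm,
      iff_of_false (fun h => (h₁ q hq p hp).2 h.symm) (fun h => (h₂ q hq p hp).2 h.symm)⟩

theorem isPartialIso_image [DecidableEq α] [DecidableEq β] {ι : Type*} (s : Finset ι)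
    (f : ι → α) (g : ι → β)
    (h : ∀ i ∈ s, ∀ j ∈ s, (f i = f j ↔ g i = g j) ∧ (G.Adj (f i) (f j) ↔ H.Adj (g i) (g j))) :
    IsPartialIso G H (s.image fun i => (f i, g i)) := by
  simp only [IsPartialIso, Finset.forall_mem_image]
  exact h

theorem IsPartialIso.insert_of_adj_iff [DecidableEq α] [DecidableEq β] {P : Finset (α × β)}
    (hP : IsPartialIso G H P) {a : α} {b : β} (ha : ∀ q ∈ P, q.1 ≠ a) (hb : ∀ q ∈ P, q.2 ≠ b)
    (hab : ∀ q ∈ P, G.Adj a q.1 ↔ H.Adj b q.2) : IsPartialIso G H (insert (a, b) P) := by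
  rw [Finset.insert_eq]
  refine (isPartialIso_singleton _).union hP fun p hp q hq => ?_
  rw [Finset.mem_singleton.1 hp]
  exact ⟨iff_of_false (ha q hq).symm (hb q hq).symm, hab q hq⟩

theorem IsPartialIso.exists_insert_right [DecidableEq α] [DecidableEq β] (hH : H.HasPropR)
    {P : Finset (α × β)} (hP : IsPartialIso G H P) {a : α} (ha : ∀ q ∈ P, q.1 ≠ a) :
    ∃ b, IsPartialIso G H (insert (a, b) P) := by
  obtain ⟨b, hb, hadj⟩ := hH.exists_adj_iff (P.image Prod.snd)
    fun c => ∃ q ∈ P, q.2 = c ∧ G.Adj a q.1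
  refine ⟨b, hP.insert_of_adj_iff ha (fun q hq h => hb (Finset.mem_image.2 ⟨q, hq, h⟩))
    fun q hq => ?_⟩
  rw [hadj _ (Finset.mem_image_of_mem _ hq)]
  exact ⟨fun h => ⟨q, hq, rfl, h⟩, fun ⟨q', hq', h, h'⟩ => ((hP q' hq' q hq).1.2 h) ▸ h'⟩

theorem IsPartialIso.exists_insert_left [DecidableEq α] [DecidableEq β] (hG : G.HasPropR)
    {P : Finset (α × β)} (hP : IsPartialIso G H P) {b : β} (hb : ∀ q ∈ P, q.2 ≠ b) :
    ∃ a, IsPartialIso G H (insert (a, b) P) := by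
  obtain ⟨a, ha, hadj⟩ := hG.exists_adj_iff (P.image Prod.fst)
    fun c => ∃ q ∈ P, q.1 = c ∧ H.Adj b q.2
  refine ⟨a, hP.insert_of_adj_iff (fun q hq h => ha (Finset.mem_image.2 ⟨q, hq, h⟩)) hb
    fun q hq => ?_⟩
  rw [hadj _ (Finset.mem_image_of_mem _ hq)]
  exact ⟨fun ⟨q', hq', h, h'⟩ => ((hP q' hq' q hq).1.1 h) ▸ h', fun h => ⟨q, hq, rfl, h⟩⟩

theorem exists_iso_of_monotone (P : ℕ → Finset (α × β)) (hmono : Monotone P)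
    (hP : ∀ n, IsPartialIso G H (P n)) (hdom : ∀ a, ∃ n b, (a, b) ∈ P n)
    (hran : ∀ b, ∃ n a, (a, b) ∈ P n) : ∃ e : G ≃g H, ∀ n, ∀ p ∈ P n, e p.1 = p.2 := by
  have key : ∀ {m n p q}, p ∈ P m → q ∈ P n →
      (p.1 = q.1 ↔ p.2 = q.2) ∧ (G.Adj p.1 q.1 ↔ H.Adj p.2 q.2) := fun hp hq =>
    hP _ _ (hmono (le_max_left _ _) hp) _ (hmono (le_max_right _ _) hq)
  choose n f hf using hdom
  have hf_eq : ∀ {m} {p : α × β}, p ∈ P m → f p.1 = p.2 := fun hp => (key (hf _) hp).1.1 rfl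
  have hbij : Bijective f := by
    refine ⟨fun a a' h => (key (hf a) (hf a')).1.2 h, fun b => ?_⟩
    obtain ⟨m, a, hab⟩ := hran b
    exact ⟨a, hf_eq hab⟩
  refine ⟨⟨Equiv.ofBijective f hbij, fun {a a'} => ?_⟩, fun m p hp => hf_eq hp⟩
  exact (key (hf a) (hf a')).2.symm

end PartialIso

namespace Monoid.Coprod

variable {M N : Type*} [Monoid M] [Monoid N]

def ofSum : M ⊕ N → M ∗ N := Sum.elim inl inr

def IsReducedWord (l : List (M ⊕ N)) : Prop :=
  l.IsChain (fun x y => x.isLeft ≠ y.isLeft) ∧ ∀ x ∈ l, ofSum x ≠ 1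

theorem isReducedWord_cons {x : M ⊕ N} {l : List (M ⊕ N)} :
    IsReducedWord (x :: l) ↔
      ofSum x ≠ 1 ∧ (∀ y ∈ l.head?, x.isLeft ≠ y.isLeft) ∧ IsReducedWord l := by
  simp only [IsReducedWord, List.isChain_cons, List.forall_mem_cons]
  tauto

theorem IsReducedWord.reverse {l : List (M ⊕ N)} (hl : IsReducedWord l) :
    IsReducedWord l.reverse :=
  ⟨List.isChain_reverse.2 (hl.1.imp fun _ _ h => Ne.symm h),
    fun x hx => hl.2 x (List.mem_reverse.1 hx)⟩

theorem exists_ofSum_mul_eq {x y : M ⊕ N} (h : x.isLeft = y.isLeft) :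
    ∃ z, ofSum z = ofSum x * ofSum y := by
  rcases x with m | n <;> rcases y with m' | n'
  · exact ⟨.inl (m * m'), map_mul inl m m'⟩
  · simp at h
  · simp at h
  · exact ⟨.inr (n * n'), map_mul inr n n'⟩

theorem exists_shorter_of_not_isReducedWord {l : List (M ⊕ N)} (hl : ¬ IsReducedWord l) :
    ∃ l' : List (M ⊕ N), l'.length < l.length ∧ (l'.map ofSum).prod = (l.map ofSum).prod := by
  induction l with
  | nil => exact absurd ⟨List.isChain_nil, by simp⟩ hl
  | cons x l ih =>
    by_cases hx : ofSum x = 1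
    · exact ⟨l, by simp, by simp [hx]⟩
    by_cases hred : IsReducedWord l
    · obtain ⟨y, l', rfl, hxy⟩ : ∃ y l', l = y :: l' ∧ x.isLeft = y.isLeft := by
        rcases l with _ | ⟨y, l'⟩
        · exact absurd (isReducedWord_cons.2 ⟨hx, by simp, hred⟩) hl
        · refine ⟨y, l', rfl, not_not.1 fun h => hl (isReducedWord_cons.2 ⟨hx, ?_, hred⟩)⟩
          simpa using h
      obtain ⟨z, hz⟩ := exists_ofSum_mul_eq hxy
      exact ⟨z :: l', by simp, by simp [hz, mul_assoc]⟩
    · obtain ⟨l', hlen, hprod⟩ := ih hred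
      exact ⟨x :: l', by simpa using hlen, by simp [hprod]⟩

theorem exists_isReducedWord_prod_eq (w : M ∗ N) :
    ∃ l, IsReducedWord l ∧ (l.map ofSum).prod = w := by
  obtain ⟨l, rfl⟩ : ∃ l : List (M ⊕ N), (l.map ofSum).prod = w := by
    induction w using induction_on' with
    | one => exact ⟨[], rfl⟩
    | inl_mul m _ ih => obtain ⟨l, rfl⟩ := ih; exact ⟨.inl m :: l, rfl⟩
    | inr_mul n _ ih => obtain ⟨l, rfl⟩ := ih; exact ⟨.inr n :: l, rfl⟩
  induction h : l.length using Nat.strong_induction_on generalizing l with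
  | _ n ih =>
    by_cases hl : IsReducedWord l
    · exact ⟨l, hl, rfl⟩
    obtain ⟨l', hlen, hprod⟩ := exists_shorter_of_not_isReducedWord hl
    obtain ⟨l'', hred, hprod'⟩ := ih _ (h ▸ hlen) l' rfl
    exact ⟨l'', hred, hprod'.trans hprod⟩

end Monoid.Coprod

theorem exists_seq_frequently_eq {α : Type*} [Countable α] [Nonempty α] :
    ∃ f : ℕ → α, ∀ a, ∃ᶠ k in Filter.atTop, f k = a := by
  obtain ⟨e, he⟩ := exists_surjective_nat α
  refine ⟨fun k => e k.unpair.1, fun a => Filter.frequently_atTop.2 fun n => ?_⟩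
  obtain ⟨m, rfl⟩ := he a
  exact ⟨Nat.pair m n, Nat.right_le_pair m n, by simp⟩

section LevelGraph

variable {Γ : Type*} [Group Γ] (code : ℕ → Finset (Γ × ℕ))

/-- A vertex `(g, n)` is joined to a vertex `(h, m)` of lower level `m < n` iff the relative
position `(g⁻¹ * h, m)` is listed in `code n`; left translation preserves relative positions. -/
def levelGraph : SimpleGraph (Γ × ℕ) where
  Adj p q := (p.2 < q.2 ∧ (q.1⁻¹ * p.1, p.2) ∈ code q.2) ∨
    (q.2 < p.2 ∧ (p.1⁻¹ * q.1, q.2) ∈ code p.2)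
  symm := ⟨fun _ _ h => Or.symm h⟩
  loopless := ⟨fun _ h => by rcases h with ⟨h, -⟩ | ⟨h, -⟩ <;> exact lt_irrefl _ h⟩

def levelGraph.translate : Γ →* (levelGraph code ≃g levelGraph code) where
  toFun g := ⟨(Equiv.mulLeft g).prodCongr (Equiv.refl ℕ), by simp [levelGraph, mul_assoc]⟩
  map_one' := RelIso.ext fun p => Prod.ext (one_mul p.1) rfl
  map_mul' g h := RelIso.ext fun p => Prod.ext (mul_assoc g h p.1) rfl

namespace levelGraph

theorem translate_apply (g : Γ) (p : Γ × ℕ) : translate code g p = (g * p.1, p.2) := rfl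

theorem hasPropR (hcode : ∀ U, ∃ᶠ k in Filter.atTop, code k = U) :
    (levelGraph code).HasPropR := by
  classical
  intro U W hUW
  -- the witness is `(1, k)` for a level `k` above `U ∪ W` with `code k = U`
  obtain ⟨k, hk, hkU⟩ := Filter.frequently_atTop.1 (hcode U) ((U ∪ W).sup Prod.snd + 1)
  have hlt : ∀ p ∈ U ∪ W, p.2 < k := fun p hp =>
    lt_of_le_of_lt (Finset.le_sup (f := Prod.snd) hp) hk
  refine ⟨(1, k), fun h => (hlt _ (Finset.mem_union_left _ h)).false,
    fun h => (hlt _ (Finset.mem_union_right _ h)).false, fun u hu => ?_, fun w hw => ?_⟩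
  · exact Or.inr ⟨hlt u (Finset.mem_union_left _ hu), by simpa [hkU] using hu⟩
  · rintro (⟨h, -⟩ | ⟨-, h⟩)
    · exact (h.trans (hlt w (Finset.mem_union_right _ hw))).false
    · rw [hkU, inv_one, one_mul] at h
      exact Finset.disjoint_left.1 hUW h hw

theorem translate_ne_self {g : Γ} (hg : g ≠ 1) (p : Γ × ℕ) : translate code g p ≠ p :=
  fun h => hg (mul_eq_right.1 (congrArg Prod.fst h))

theorem not_adj_translate_self (g : Γ) (p : Γ × ℕ) :
    ¬ (levelGraph code).Adj (translate code g p) p := by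
  rintro (⟨h, -⟩ | ⟨h, -⟩) <;> exact lt_irrefl _ h

theorem exists_translate_separated [Infinite Γ] (A C : Finset (Γ × ℕ)) :
    ∃ g, ∀ a ∈ A, ∀ c ∈ C,
      translate code g a ≠ c ∧ ¬ (levelGraph code).Adj (translate code g a) c := by
  classical
  -- contains every `g` translating some `a ∈ A` onto or next to some `c ∈ C`
  obtain ⟨g, hg⟩ := Infinite.exists_notMem_finset ((A ×ˢ C).biUnion fun ac =>
    insert (ac.2.1 * ac.1.1⁻¹) ((code ac.2.2).image (fun s => ac.2.1 * s.1 * ac.1.1⁻¹) ∪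
      (code ac.1.2).image (fun s => ac.2.1 * s.1⁻¹ * ac.1.1⁻¹)))
  refine ⟨g, fun a ha c hc => ?_⟩
  simp only [Finset.mem_biUnion, Finset.mem_product, Finset.mem_insert, Finset.mem_union,
    Finset.mem_image, not_exists, not_and, not_or] at hg
  obtain ⟨hne, hlow, hhigh⟩ := hg (a, c) ⟨ha, hc⟩
  refine ⟨fun h => hne ?_, ?_⟩
  · rw [← congrArg Prod.fst h, translate_apply]
    group
  · rintro (⟨-, h⟩ | ⟨-, h⟩)
    · exact hlow _ h (by simp only [translate_apply]; group)
    · exact hhigh _ h (by simp only [translate_apply]; group)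

end levelGraph

end LevelGraph

theorem exists_monotone_seq_forall_exists {P ι : Type*} [Preorder P] [Countable ι] (p : P)
    (Q : ι → P → Prop) (hQ : ∀ i x, ∃ y, x ≤ y ∧ Q i y) :
    ∃ s : ℕ → P, Monotone s ∧ ∀ i, ∃ n, Q i (s n) := by
  have := Encodable.ofCountable ι
  let D : ι → Order.Cofinal P := fun i => ⟨{y | Q i y}, fun x => (hQ i x).imp fun _ h => h.symm⟩
  exact ⟨Order.sequenceOfCofinals p D, Order.sequenceOfCofinals.monotone p D,
    fun i => ⟨_, Order.sequenceOfCofinals.encode_mem p D i⟩⟩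

def SimpleGraph.Iso.autCongr_s15 {V W : Type*} {G : SimpleGraph V} {H : SimpleGraph W}
    (e : G ≃g H) : (G ≃g G) ≃* (H ≃g H) where
  toFun φ := (e.symm.trans φ).trans e
  invFun ψ := (e.trans ψ).trans e.symm
  left_inv φ := RelIso.ext fun v => by simp
  right_inv ψ := RelIso.ext fun v => by simp
  map_mul' φ ψ := RelIso.ext fun v => by simp [RelIso.mul_apply]

theorem SimpleGraph.Iso.autCongr_apply_s15 {V W : Type*} {G : SimpleGraph V} {H : SimpleGraph W}
    (e : G ≃g H) (φ : G ≃g G) (w : W) : e.autCongr_s15 φ w = e (φ (e.symm w)) := rfl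

section Approx

open scoped Classical

variable {X V : Type*} {G : SimpleGraph X} {R : SimpleGraph V} {Γ₁ Γ₂ : Type*} [Group Γ₁]
  [Group Γ₂] {α : Γ₁ →* (G ≃g G)}

variable (G R Γ₂) in
/-- A stage of the back-and-forth construction: a finite partial isomorphism `P` from `G`
to `R`, and an action `μ` of `Γ₂` by partial automorphisms of `R` on the finite set `B`. -/
structure Approx where
  P : Finset (X × V)
  B : Finset V
  μ : Γ₂ → V → V
  isPartialIso : IsPartialIso G R P
  μ_mem : ∀ t, ∀ v ∈ B, μ t v ∈ B
  μ_one : ∀ v ∈ B, μ 1 v = v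
  μ_mul : ∀ s t, ∀ v ∈ B, μ (s * t) v = μ s (μ t v)
  adj_μ : ∀ t, ∀ v ∈ B, ∀ w ∈ B, R.Adj (μ t v) (μ t w) ↔ R.Adj v w

namespace Approx

instance : Preorder (Approx G R Γ₂) where
  le S S' := S.P ⊆ S'.P ∧ S.B ⊆ S'.B ∧ ∀ t, ∀ v ∈ S.B, S'.μ t v = S.μ t v
  le_refl _ := ⟨subset_rfl, subset_rfl, fun _ _ _ => rfl⟩
  le_trans _ _ _ h₁ h₂ := ⟨h₁.1.trans h₂.1, h₁.2.1.trans h₂.2.1,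
    fun t v hv => (h₂.2.2 t v (h₁.2.1 hv)).trans (h₁.2.2 t v hv)⟩

variable {S S' : Approx G R Γ₂}

theorem P_mono (h : S ≤ S') : S.P ⊆ S'.P := h.1

theorem B_mono (h : S ≤ S') : S.B ⊆ S'.B := h.2.1

theorem μ_eq_of_le (h : S ≤ S') (t : Γ₂) {v : V} (hv : v ∈ S.B) : S'.μ t v = S.μ t v :=
  h.2.2 t v hv

noncomputable def dom (S : Approx G R Γ₂) : Finset X := S.P.image Prod.fst

noncomputable def ran (S : Approx G R Γ₂) : Finset V := S.P.image Prod.snd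

theorem ran_mono (h : S ≤ S') : S.ran ⊆ S'.ran := Finset.image_subset_image (P_mono h)

variable (G R Γ₂) in
def empty : Approx G R Γ₂ where
  P := ∅
  B := ∅
  μ _ v := v
  isPartialIso := by simp [IsPartialIso]
  μ_mem := by simp
  μ_one := by simp
  μ_mul := by simp
  adj_μ := by simp

def withP (S : Approx G R Γ₂) (P : Finset (X × V)) (hP : IsPartialIso G R P) : Approx G R Γ₂ :=
  { S with P, isPartialIso := hP }

@[simp]
theorem withP_P (S : Approx G R Γ₂) (P : Finset (X × V)) (hP : IsPartialIso G R P) :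
    (S.withP P hP).P = P := rfl

@[simp]
theorem withP_B (S : Approx G R Γ₂) (P : Finset (X × V)) (hP : IsPartialIso G R P) :
    (S.withP P hP).B = S.B := rfl

@[simp]
theorem withP_μ (S : Approx G R Γ₂) (P : Finset (X × V)) (hP : IsPartialIso G R P) :
    (S.withP P hP).μ = S.μ := rfl

theorem le_withP (S : Approx G R Γ₂) {P : Finset (X × V)} (hP : IsPartialIso G R P)
    (hsub : S.P ⊆ P) : S ≤ S.withP P hP :=
  ⟨hsub, subset_rfl, fun _ _ _ => rfl⟩

noncomputable def extendAction {ι : Type*} (μ : Γ₂ → V → V) (z : ι × Γ₂ → V) (r : Γ₂) (a : V) :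
    V :=
  if h : ∃ k, z k = a then z (h.choose.1, r * h.choose.2) else μ r a

theorem extendAction_apply {ι : Type*} {μ : Γ₂ → V → V} {z : ι × Γ₂ → V} (hz : Injective z)
    (r : Γ₂) (k : ι × Γ₂) : extendAction μ z r (z k) = z (k.1, r * k.2) := by
  have h : ∃ k', z k' = z k := ⟨k, rfl⟩
  simp only [extendAction, dif_pos h, hz h.choose_spec]

theorem extendAction_of_notMem {ι : Type*} {μ : Γ₂ → V → V} {z : ι × Γ₂ → V} {a : V}
    (ha : ∀ k, z k ≠ a) (r : Γ₂) : extendAction μ z r a = μ r a :=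
  dif_neg fun ⟨k, hk⟩ => ha k hk

theorem exists_le_of_orbits {ι : Type*} [Finite ι] [Finite Γ₂] (S : Approx G R Γ₂)
    (z : ι × Γ₂ → V) (hz : Injective z) (hzB : ∀ k, z k ∉ S.B)
    (hcross : ∀ i s, ∀ b ∈ S.B, R.Adj (z (i, s)) b ↔ R.Adj (z (i, 1)) (S.μ s⁻¹ b))
    (hnew : ∀ i j r s s', R.Adj (z (i, r * s)) (z (j, r * s')) ↔ R.Adj (z (i, s)) (z (j, s'))) :
    ∃ S', S ≤ S' ∧ S'.P = S.P ∧ (∀ k, z k ∈ S'.B) ∧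
      ∀ i r s, S'.μ r (z (i, s)) = z (i, r * s) := by
  let μ' := extendAction S.μ z
  have hμ'z : ∀ r k, μ' r (z k) = z (k.1, r * k.2) := extendAction_apply hz
  have hμ'B : ∀ r, ∀ b ∈ S.B, μ' r b = S.μ r b := fun r b hb =>
    extendAction_of_notMem (fun k h => hzB k (by rwa [h])) r
  have hcross' : ∀ i r s, ∀ b ∈ S.B, R.Adj (z (i, r * s)) (S.μ r b) ↔ R.Adj (z (i, s)) b := by
    intro i r s b hb
    rw [hcross _ _ _ (S.μ_mem r b hb), hcross _ _ _ hb, ← S.μ_mul _ _ _ hb, mul_inv_rev,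
      inv_mul_cancel_right]
  let Z := (Set.finite_range z).toFinset
  have hcases : ∀ a ∈ S.B ∪ Z, a ∈ S.B ∨ ∃ k, z k = a := fun a ha => by
    simpa [Z] using ha
  refine ⟨⟨S.P, S.B ∪ Z, μ', S.isPartialIso, ?_, ?_, ?_, ?_⟩,
    ⟨subset_rfl, Finset.subset_union_left, hμ'B⟩, rfl, fun k => by simp [Z],
    fun i r s => hμ'z r (i, s)⟩
  · intro r a ha
    rcases hcases a ha with ha | ⟨k, rfl⟩
    · rw [hμ'B r a ha]; exact Finset.mem_union_left _ (S.μ_mem r a ha)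
    · rw [hμ'z]; simp [Z]
  · intro a ha
    rcases hcases a ha with ha | ⟨k, rfl⟩
    · rw [hμ'B 1 a ha, S.μ_one a ha]
    · rw [hμ'z, one_mul]
  · intro r r' a ha
    rcases hcases a ha with ha | ⟨k, rfl⟩
    · rw [hμ'B _ a ha, hμ'B _ a ha, hμ'B _ _ (S.μ_mem _ a ha), S.μ_mul _ _ a ha]
    · rw [hμ'z, hμ'z, hμ'z, mul_assoc]
  · intro r a ha b hb
    rcases hcases a ha with ha | ⟨k, rfl⟩ <;> rcases hcases b hb with hb | ⟨k', rfl⟩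
    · rw [hμ'B r a ha, hμ'B r b hb]; exact S.adj_μ r a ha b hb
    · rw [hμ'B r a ha, hμ'z, R.adj_comm, hcross' _ _ _ _ ha, R.adj_comm]
    · rw [hμ'B r b hb, hμ'z, hcross' _ _ _ _ hb]
    · rw [hμ'z, hμ'z, hnew]

theorem exists_orbit_points [Finite Γ₂] (hR : R.HasPropR) (S : Approx G R Γ₂) {v : V}
    (hv : v ∉ S.B) (E : Finset V) :
    ∃ z : Γ₂ → V, Injective z ∧ z 1 = v ∧ (∀ s, z s ∉ S.B) ∧ (∀ s s', ¬ R.Adj (z s) (z s')) ∧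
      (∀ s, ∀ b ∈ S.B, R.Adj (z s) b ↔ R.Adj v (S.μ s⁻¹ b)) ∧
      ∀ s ≠ 1, z s ∉ E ∧ ∀ w ∈ E, w ∉ S.B → ¬ R.Adj (z s) w := by
  obtain ⟨z', hz'inj, hz'⟩ := hR.exists_extension (⊥ : SimpleGraph Γ₂) (S.B ∪ E ∪ {v})
    fun s c => c ∈ S.B ∧ R.Adj v (S.μ s⁻¹ c)
  have hz'adj : ∀ s, ∀ c ∈ S.B ∪ E ∪ {v}, R.Adj (z' s) c ↔ c ∈ S.B ∧ R.Adj v (S.μ s⁻¹ c) :=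
    fun s => (hz' s).2.1
  have hz'v : ∀ s, z' s ≠ v := fun s h => (hz' s).1 (by simp [h])
  have hz'v_adj : ∀ s, ¬ R.Adj (z' s) v := fun s h => hv ((hz'adj s v (by simp)).1 h).1
  let z := update z' 1 v
  have hz1 : z 1 = v := update_self _ _ _
  have hzs : ∀ s ≠ 1, z s = z' s := fun s hs => update_of_ne hs _ _
  refine ⟨z, fun s s' h => ?_, hz1, fun s => ?_, fun s s' h => ?_, fun s b hb => ?_,
    fun s hs => ⟨fun h => (hz' s).1 (by simp [← hzs s hs, h]), fun w hw hwB h => hwB ?_⟩⟩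
  · by_cases hs : s = 1 <;> by_cases hs' : s' = 1
    · rw [hs, hs']
    · rw [hs, hz1, hzs s' hs'] at h; exact absurd h.symm (hz'v s')
    · rw [hs', hz1, hzs s hs] at h; exact absurd h (hz'v s)
    · rw [hzs s hs, hzs s' hs'] at h; exact hz'inj h
  · by_cases hs : s = 1
    · rw [hs, hz1]; exact hv
    · rw [hzs s hs]; exact fun h => (hz' s).1 (by simp [h])
  · by_cases hs : s = 1 <;> by_cases hs' : s' = 1
    · rw [hs, hs'] at h; exact h.ne rfl
    · rw [hs, hz1, hzs s' hs'] at h; exact hz'v_adj s' h.symm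
    · rw [hs', hz1, hzs s hs] at h; exact hz'v_adj s h
    · rw [hzs s hs, hzs s' hs', (hz' s).2.2] at h; exact h
  · by_cases hs : s = 1
    · rw [hs, hz1, inv_one, S.μ_one b hb]
    · rw [hzs s hs, hz'adj s b (by simp [hb])]; exact and_iff_right hb
  · rw [hzs s hs, hz'adj s w (by simp [hw])] at h
    exact h.1

theorem exists_le_orbit [Finite Γ₂] (hR : R.HasPropR) (S : Approx G R Γ₂) {v : V}
    (hv : v ∉ S.B) (E : Finset V) :
    ∃ (S' : Approx G R Γ₂) (z : Γ₂ → V), S ≤ S' ∧ S'.P = S.P ∧ z 1 = v ∧ (∀ s, z s ∈ S'.B) ∧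
      (∀ r s, S'.μ r (z s) = z (r * s)) ∧
      (∀ s, ∀ b ∈ S.B, R.Adj (z s) b ↔ R.Adj v (S.μ s⁻¹ b)) ∧
      ∀ s ≠ 1, z s ∉ E ∧ ∀ w ∈ E, w ∉ S.B → ¬ R.Adj (z s) w := by
  obtain ⟨z, hinj, hz1, hzB, hnonadj, hcross, hE⟩ := S.exists_orbit_points hR hv E
  obtain ⟨S', hle, hP, hmem, hμ⟩ := S.exists_le_of_orbits (ι := Unit) (fun k => z k.2)
    (fun k k' h => Prod.ext rfl (hinj h)) (fun k => hzB k.2)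
    (fun _ s b hb => by rw [hz1]; exact hcross s b hb)
    (fun _ _ _ _ _ => iff_of_false (hnonadj _ _) (hnonadj _ _))
  exact ⟨S', z, hle, hP, hz1, fun s => hmem ((), s), fun r s => hμ () r s, hcross, hE⟩

theorem exists_le_mem_dom (hR : R.HasPropR) (S : Approx G R Γ₂) (x : X) :
    ∃ S', S ≤ S' ∧ x ∈ S'.dom := by
  by_cases hx : x ∈ S.dom
  · exact ⟨S, le_rfl, hx⟩
  obtain ⟨b, hb⟩ := S.isPartialIso.exists_insert_right hR
    fun q hq h => hx (Finset.mem_image.2 ⟨q, hq, h⟩)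
  exact ⟨S.withP _ hb, S.le_withP hb (Finset.subset_insert _ _),
    Finset.mem_image_of_mem Prod.fst (Finset.mem_insert_self (x, b) S.P)⟩

theorem exists_le_mem_ran (hG : G.HasPropR) (S : Approx G R Γ₂) (v : V) :
    ∃ S', S ≤ S' ∧ v ∈ S'.ran := by
  by_cases hv : v ∈ S.ran
  · exact ⟨S, le_rfl, hv⟩
  obtain ⟨a, ha⟩ := S.isPartialIso.exists_insert_left hG
    fun q hq h => hv (Finset.mem_image.2 ⟨q, hq, h⟩)
  exact ⟨S.withP _ ha, S.le_withP ha (Finset.subset_insert _ _),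
    Finset.mem_image_of_mem Prod.snd (Finset.mem_insert_self (a, v) S.P)⟩

theorem exists_le_subset_ran (hG : G.HasPropR) (S : Approx G R Γ₂) (D : Finset V) :
    ∃ S', S ≤ S' ∧ D ⊆ S'.ran := by
  induction D using Finset.induction_on with
  | empty => exact ⟨S, le_rfl, Finset.empty_subset _⟩
  | insert v D _ ih =>
    obtain ⟨S₁, h₁, hD⟩ := ih
    obtain ⟨S₂, h₂, hv⟩ := S₁.exists_le_mem_ran hG v
    exact ⟨S₂, h₁.trans h₂, Finset.insert_subset hv (hD.trans (ran_mono h₂))⟩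

theorem exists_le_mem_ran_B [Finite Γ₂] (hG : G.HasPropR) (hR : R.HasPropR)
    (S : Approx G R Γ₂) (v : V) : ∃ S', S ≤ S' ∧ v ∈ S'.ran ∧ v ∈ S'.B := by
  obtain ⟨S₁, h₁, hran⟩ := S.exists_le_mem_ran hG v
  by_cases hB : v ∈ S₁.B
  · exact ⟨S₁, h₁, hran, hB⟩
  obtain ⟨S₂, z, h₂, -, hz1, hzB, -⟩ := S₁.exists_le_orbit hR hB ∅
  exact ⟨S₂, h₁.trans h₂, ran_mono h₂ hran, hz1 ▸ hzB 1⟩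

variable (α) in
def Step (S : Approx G R Γ₂) : Γ₁ ⊕ Γ₂ → V → V → Prop
  | .inl g, v, w => ∃ x, (x, v) ∈ S.P ∧ (α g x, w) ∈ S.P
  | .inr t, v, w => v ∈ S.B ∧ S.μ t v = w

variable (α) in
/-- The letters are applied from left to right, so in the limit `v` is sent to `w` by the
product of the reversed word. -/
def Path (S : Approx G R Γ₂) : List (Γ₁ ⊕ Γ₂) → V → V → Prop
  | [], v, w => v = w
  | ℓ :: l, v, w => ∃ u, S.Step α ℓ v u ∧ S.Path l u w

theorem Step.mono (h : S ≤ S') {ℓ : Γ₁ ⊕ Γ₂} {v w : V} (hs : S.Step α ℓ v w) :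
    S'.Step α ℓ v w := by
  rcases ℓ with g | t
  · obtain ⟨x, h₁, h₂⟩ := hs
    exact ⟨x, P_mono h h₁, P_mono h h₂⟩
  · exact ⟨B_mono h hs.1, (μ_eq_of_le h t hs.1).trans hs.2⟩

theorem Path.mono (h : S ≤ S') {l : List (Γ₁ ⊕ Γ₂)} {v w : V} (hp : S.Path α l v w) :
    S'.Path α l v w := by
  induction l generalizing v with
  | nil => exact hp
  | cons ℓ l ih =>
    obtain ⟨u, hu, hp⟩ := hp
    exact ⟨u, hu.mono h, ih hp⟩

variable (α) in
def Realizes (S : Approx G R Γ₂) (F : Finset (V × V)) : Prop :=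
  ∃ (g h : Γ₁) (t : Γ₂), ∀ p ∈ F, S.Path α [.inl g, .inr t, .inl h] p.1 p.2

theorem exists_le_fresh_orbits [Finite Γ₂] (hR : R.HasPropR) (S : Approx G R Γ₂) {ι : Type*}
    [Finite ι] (H : SimpleGraph ι) :
    ∃ (S' : Approx G R Γ₂) (z : ι × Γ₂ → V), S ≤ S' ∧ S'.P = S.P ∧ Injective z ∧
      (∀ k, z k ∈ S'.B) ∧ (∀ i r s, S'.μ r (z (i, s)) = z (i, r * s)) ∧
      (∀ i j s s', R.Adj (z (i, s)) (z (j, s')) ↔ H.Adj i j ∧ s = s') ∧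
      ∀ k, ∀ c ∈ S.B ∪ S.ran, z k ≠ c ∧ ¬ R.Adj (z k) c := by
  obtain ⟨z, hz, hz'⟩ := hR.exists_extension (H □ (⊥ : SimpleGraph Γ₂)) (S.B ∪ S.ran)
    fun _ _ => False
  have hz_adj : ∀ i j s s', R.Adj (z (i, s)) (z (j, s')) ↔ H.Adj i j ∧ s = s' :=
    fun i j s s' => by simp [(hz' _).2.2]
  have hz_new : ∀ k, ∀ c ∈ S.B ∪ S.ran, z k ≠ c ∧ ¬ R.Adj (z k) c := fun k c hc =>
    ⟨fun h => (hz' k).1 (h ▸ hc), (hz' k).2.1 c hc |>.1⟩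
  obtain ⟨S', hle, hP', hzB, hμ⟩ := S.exists_le_of_orbits z hz
    (fun k hk => (hz_new k _ (Finset.mem_union_left _ hk)).1 rfl)
    (fun i s b hb => iff_of_false (hz_new _ b (Finset.mem_union_left _ hb)).2
      (hz_new _ _ (Finset.mem_union_left _ (S.μ_mem _ b hb))).2)
    (fun i j r s s' => by simp only [hz_adj, mul_right_inj])
  exact ⟨S', z, hle, hP', hz, hzB, hμ, hz_adj, hz_new⟩

/-- Glues a free `Γ₂`-orbit of fresh vertices of `R` between the images of `x i` and `y i`. -/
theorem exists_le_glue [Finite Γ₂] (hR : R.HasPropR) (S : Approx G R Γ₂) {ι : Type*} [Finite ι]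
    (H : SimpleGraph ι) {x y : ι → X} (hx : Injective x) (hy : Injective y)
    (hxH : ∀ i j, G.Adj (x i) (x j) ↔ H.Adj i j) (hyH : ∀ i j, G.Adj (y i) (y j) ↔ H.Adj i j)
    (hxS : ∀ i, ∀ c ∈ S.dom, x i ≠ c ∧ ¬ G.Adj (x i) c)
    (hyS : ∀ i, ∀ c ∈ S.dom, y i ≠ c ∧ ¬ G.Adj (y i) c)
    (hxy : ∀ i j, x i ≠ y j ∧ ¬ G.Adj (x i) (y j)) {t : Γ₂} (ht : t ≠ 1) :
    ∃ S', S ≤ S' ∧ ∀ i, ∃ m, (x i, m) ∈ S'.P ∧ m ∈ S'.B ∧ (y i, S'.μ t m) ∈ S'.P := by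
  have := Fintype.ofFinite ι
  obtain ⟨S', z, hle, hP', hz, hzB, hμ, hz_adj, hz_new⟩ := S.exists_le_fresh_orbits hR H
  have hz_eq : ∀ i j s s', z (i, s) = z (j, s') ↔ i = j ∧ s = s' := fun _ _ _ _ =>
    hz.eq_iff.trans Prod.ext_iff
  let Q₁ := Finset.univ.image fun i => (x i, z (i, 1))
  let Q₂ := Finset.univ.image fun i => (y i, z (i, t))
  have hQ₁ : IsPartialIso G R Q₁ := isPartialIso_image _ _ _ fun i _ j _ => by
    simp [hx.eq_iff, hxH, hz_eq, hz_adj]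
  have hQ₂ : IsPartialIso G R Q₂ := isPartialIso_image _ _ _ fun i _ j _ => by
    simp [hy.eq_iff, hyH, hz_eq, hz_adj]
  have hdom : ∀ {q}, q ∈ S.P → q.1 ∈ S.dom := fun hq => Finset.mem_image_of_mem _ hq
  have hran : ∀ {q}, q ∈ S.P → q.2 ∈ S.B ∪ S.ran := fun hq =>
    Finset.mem_union_right _ (Finset.mem_image_of_mem _ hq)
  have hP : IsPartialIso G R (S'.P ∪ Q₁ ∪ Q₂) := by
    rw [hP']
    refine (S.isPartialIso.union_of_separated hQ₁ ?_ ?_).union_of_separated hQ₂ ?_ ?_ <;>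
      simp only [Q₁, Q₂, Finset.forall_mem_image, Finset.forall_mem_union, Finset.mem_univ,
        forall_const]
    · exact fun i q hq => hxS i _ (hdom hq)
    · exact fun i q hq => hz_new _ _ (hran hq)
    · exact fun i => ⟨fun q hq => hyS i _ (hdom hq),
        fun j => ⟨(hxy j i).1.symm, fun h => (hxy j i).2 h.symm⟩⟩
    · exact fun i => ⟨fun q hq => hz_new _ _ (hran hq), fun j => by simp [hz_eq, hz_adj, ht]⟩
  refine ⟨S'.withP _ hP, hle.trans (S'.le_withP hP (Finset.subset_union_left.trans
    Finset.subset_union_left)), fun i => ⟨z (i, 1), ?_, hzB _, ?_⟩⟩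
  · exact Finset.mem_union_left _ (Finset.mem_union_right _
      (Finset.mem_image_of_mem _ (Finset.mem_univ i)))
  · simp only [withP_μ, hμ, mul_one]
    exact Finset.mem_union_right _ (Finset.mem_image_of_mem _ (Finset.mem_univ i))

/-- After moving the domain of `F` off the current domain by `g` and its range by `h⁻¹`, the
translates are joined by `t`. -/
theorem exists_le_realizes [Finite Γ₂] (hG : G.HasPropR) (hR : R.HasPropR)
    (hα : ∀ A C : Finset X, ∃ g, ∀ a ∈ A, ∀ c ∈ C, α g a ≠ c ∧ ¬ G.Adj (α g a) c)
    (S : Approx G R Γ₂) {F : Finset (V × V)} (hF : IsPartialIso R R F) {t : Γ₂} (ht : t ≠ 1) :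
    ∃ S', S ≤ S' ∧ S'.Realizes α F := by
  obtain ⟨S₁, h₁, hran⟩ := S.exists_le_subset_ran hG (F.image Prod.fst ∪ F.image Prod.snd)
  have hpre : ∀ i : F, ∃ a b, (a, i.1.1) ∈ S₁.P ∧ (b, i.1.2) ∈ S₁.P := fun i => by
    obtain ⟨q, hq, hq1⟩ := Finset.mem_image.1 (hran (Finset.mem_union_left _
      (Finset.mem_image_of_mem Prod.fst i.2)))
    obtain ⟨q', hq', hq'2⟩ := Finset.mem_image.1 (hran (Finset.mem_union_right _
      (Finset.mem_image_of_mem Prod.snd i.2)))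
    exact ⟨q.1, q'.1, by rw [← hq1]; exact hq, by rw [← hq'2]; exact hq'⟩
  choose a b ha hb using hpre
  have ha_inj : Injective a := fun i j h => by
    have h₁ := (S₁.isPartialIso _ (ha i) _ (ha j)).1.1 h
    exact Subtype.ext (Prod.ext h₁ ((hF _ i.2 _ j.2).1.1 h₁))
  have hb_inj : Injective b := fun i j h => by
    have h₂ := (S₁.isPartialIso _ (hb i) _ (hb j)).1.1 h
    exact Subtype.ext (Prod.ext ((hF _ i.2 _ j.2).1.2 h₂) h₂)
  obtain ⟨h, hh⟩ := hα (Finset.univ.image b) S₁.dom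
  obtain ⟨g, hg⟩ := hα (Finset.univ.image a) (S₁.dom ∪ Finset.univ.image fun i => α h (b i))
  obtain ⟨S₂, h₂, hglue⟩ := S₁.exists_le_glue hR (R.comap fun i : F => i.1.1)
    ((α g).injective.comp ha_inj) ((α h).injective.comp hb_inj)
    (fun i j => (α g).map_adj_iff.trans (S₁.isPartialIso _ (ha i) _ (ha j)).2)
    (fun i j => (α h).map_adj_iff.trans
      ((S₁.isPartialIso _ (hb i) _ (hb j)).2.trans (hF _ i.2 _ j.2).2.symm))
    (fun i c hc => hg _ (by simp) c (Finset.mem_union_left _ hc))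
    (fun i c hc => hh _ (by simp) c hc)
    (fun i j => hg _ (by simp) _ (Finset.mem_union_right _ (by simp))) ht
  refine ⟨S₂, h₁.trans h₂, g, h⁻¹, t, fun p hp => ?_⟩
  obtain ⟨m, hm, hmB, hm'⟩ := hglue ⟨p, hp⟩
  refine ⟨m, ⟨_, P_mono h₂ (ha _), hm⟩, _, ⟨hmB, rfl⟩, p.2, ⟨_, hm', ?_⟩, rfl⟩
  rw [map_inv, comp_apply, RelIso.inv_apply_self]
  exact P_mono h₂ (hb _)

variable (α) in
def Moves (S : Approx G R Γ₂) (l : List (Γ₁ ⊕ Γ₂)) : Prop :=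
  ∃ v w, w ≠ v ∧ S.Path α l v w

/-- `v` is fresh enough for a letter of `Γ₁` (if `b`) or of `Γ₂` (if `!b`) to be applied
to it freely. -/
def IsFreshFor (S : Approx G R Γ₂) : Bool → V → Prop
  | true, v => v ∉ S.ran ∧ ∀ w ∈ S.ran, ¬ R.Adj v w
  | false, v => v ∉ S.B ∧ ∀ w ∈ S.B, ¬ R.Adj v w

/-- A fresh vertex `x` of `G` is matched with `v`, and its translate `α g x` with a fresh
vertex `w`. -/
theorem exists_le_step_inl (hG : G.HasPropR) (hR : R.HasPropR)
    (hfree : ∀ g ≠ 1, ∀ x, α g x ≠ x ∧ ¬ G.Adj (α g x) x) (S : Approx G R Γ₂) {g : Γ₁}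
    (hg : g ≠ 1) {v : V} (hv : S.IsFreshFor true v) (E : Finset V) :
    ∃ S' w, S ≤ S' ∧ S'.Step α (.inl g) v w ∧ w ∉ E ∧ S'.IsFreshFor false w := by
  obtain ⟨x, hxC, hx⟩ := hG.exists_adj_iff (S.dom ∪ S.dom.image (α g⁻¹)) fun _ => False
  obtain ⟨w, hwC, hw⟩ := hR.exists_adj_iff (S.B ∪ S.ran ∪ E ∪ {v}) fun _ => False
  have hdom : ∀ {q}, q ∈ S.P → q.1 ∈ S.dom := fun hq => Finset.mem_image_of_mem _ hq
  have hran : ∀ {q}, q ∈ S.P → q.2 ∈ S.ran := fun hq => Finset.mem_image_of_mem _ hq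
  have hinv : ∀ y, α g⁻¹ (α g y) = y := fun y => by rw [map_inv, RelIso.inv_apply_self]
  have hgx : ∀ q ∈ S.P, α g x ≠ q.1 ∧ ¬ G.Adj (α g x) q.1 := fun q hq => by
    have hmem : α g⁻¹ q.1 ∈ S.dom ∪ S.dom.image (α g⁻¹) :=
      Finset.mem_union_right _ (Finset.mem_image_of_mem _ (hdom hq))
    refine ⟨fun h => hxC (by rwa [← h, hinv] at hmem), fun h => ?_⟩
    have h' := (α g⁻¹).map_adj_iff.2 h
    rw [hinv] at h'
    exact (hx _ hmem).1 h'
  have hP : IsPartialIso G R (S.P ∪ {(x, v)} ∪ {(α g x, w)}) := by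
    refine (S.isPartialIso.union_of_separated (isPartialIso_singleton _) ?_ ?_).union_of_separated
      (isPartialIso_singleton _) ?_ ?_ <;> simp only [Finset.mem_singleton, forall_eq,
        Finset.forall_mem_union]
    · exact fun q hq => ⟨fun h => hxC (Finset.mem_union_left _ (h ▸ hdom hq)),
        (hx _ (Finset.mem_union_left _ (hdom hq))).1⟩
    · exact fun q hq => ⟨fun h => hv.1 (h ▸ hran hq), hv.2 _ (hran hq)⟩
    · exact ⟨hgx, hfree g hg x⟩
    · refine ⟨fun q hq => ⟨fun h => hwC (by rw [h]; simp [hran hq]), (hw _ (by simp [hran hq])).1⟩,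
        fun h => hwC (by simp [h]), (hw _ (by simp)).1⟩
  refine ⟨S.withP _ hP, w, S.le_withP hP (Finset.subset_union_left.trans
      Finset.subset_union_left),
    ⟨x, by simp, by simp⟩, fun h => hwC (by simp [h]), ?_⟩
  show w ∉ S.B ∧ ∀ b ∈ S.B, ¬ R.Adj w b
  exact ⟨fun h => hwC (by simp [h]), fun b hb => (hw b (by simp [hb])).1⟩

theorem exists_le_step_inr [Finite Γ₂] (hR : R.HasPropR) (S : Approx G R Γ₂) {t : Γ₂}
    (ht : t ≠ 1) {v : V} (hv : S.IsFreshFor false v) (E : Finset V) :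
    ∃ S' w, S ≤ S' ∧ S'.Step α (.inr t) v w ∧ w ∉ E ∧ S'.IsFreshFor true w := by
  obtain ⟨S', z, hle, hP, hz1, hzB, hμ, hcross, hfresh⟩ := S.exists_le_orbit hR hv.1 (S.ran ∪ E)
  have hran : S'.ran = S.ran := by rw [ran, hP, ran]
  refine ⟨S', z t, hle, ⟨hz1 ▸ hzB 1, by rw [← hz1, hμ, mul_one]⟩,
    fun h => (hfresh t ht).1 (Finset.mem_union_right _ h), ?_, fun r hr => ?_⟩
  · rw [hran]; exact fun h => (hfresh t ht).1 (Finset.mem_union_left _ h)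
  rw [hran] at hr
  by_cases hrB : r ∈ S.B
  · rw [hcross t r hrB]; exact hv.2 _ (S.μ_mem _ r hrB)
  · exact (hfresh t ht).2 r (Finset.mem_union_left _ hr) hrB

theorem exists_le_step [Finite Γ₂] (hG : G.HasPropR) (hR : R.HasPropR)
    (hfree : ∀ g ≠ 1, ∀ x, α g x ≠ x ∧ ¬ G.Adj (α g x) x) (S : Approx G R Γ₂)
    {ℓ : Γ₁ ⊕ Γ₂} (hℓ : Monoid.Coprod.ofSum ℓ ≠ 1) {v : V} (hv : S.IsFreshFor ℓ.isLeft v)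
    (E : Finset V) :
    ∃ S' w, S ≤ S' ∧ S'.Step α ℓ v w ∧ w ∉ E ∧ S'.IsFreshFor (!ℓ.isLeft) w := by
  rcases ℓ with g | t
  · exact S.exists_le_step_inl hG hR hfree (fun h => hℓ (by simp [Monoid.Coprod.ofSum, h])) hv E
  · exact S.exists_le_step_inr hR (fun h => hℓ (by simp [Monoid.Coprod.ofSum, h])) hv E

theorem exists_le_path [Finite Γ₂] (hG : G.HasPropR) (hR : R.HasPropR)
    (hfree : ∀ g ≠ 1, ∀ x, α g x ≠ x ∧ ¬ G.Adj (α g x) x) {l : List (Γ₁ ⊕ Γ₂)}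
    (hl : Monoid.Coprod.IsReducedWord l) (S : Approx G R Γ₂) {v : V}
    (hv : ∀ ℓ ∈ l.head?, S.IsFreshFor ℓ.isLeft v) (E : Finset V) :
    ∃ S' w, S ≤ S' ∧ S'.Path α l v w ∧ (l ≠ [] → w ∉ E) := by
  induction l generalizing S v with
  | nil => exact ⟨S, v, le_rfl, rfl, fun h => absurd rfl h⟩
  | cons ℓ l ih =>
    obtain ⟨hℓ, hhead, hl⟩ := Monoid.Coprod.isReducedWord_cons.1 hl
    obtain ⟨S₁, u, h₁, hstep, huE, hu⟩ := S.exists_le_step hG hR hfree hℓ (hv ℓ rfl) E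
    obtain ⟨S₂, w, h₂, hpath, hwE⟩ :=
      ih hl S₁ fun ℓ' hℓ' => Bool.eq_not.2 (hhead ℓ' hℓ').symm ▸ hu
    refine ⟨S₂, w, h₁.trans h₂, ⟨u, hstep.mono h₂, hpath⟩, fun _ => ?_⟩
    rcases l with _ | ⟨ℓ', l⟩
    · exact (hpath : u = w) ▸ huE
    · exact hwE (List.cons_ne_nil _ _)

theorem exists_le_moves [Finite Γ₂] (hG : G.HasPropR) (hR : R.HasPropR)
    (hfree : ∀ g ≠ 1, ∀ x, α g x ≠ x ∧ ¬ G.Adj (α g x) x) (S : Approx G R Γ₂)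
    {l : List (Γ₁ ⊕ Γ₂)} (hl : Monoid.Coprod.IsReducedWord l) (hne : l ≠ []) :
    ∃ S', S ≤ S' ∧ S'.Moves α l := by
  obtain ⟨v, hvC, hv⟩ := hR.exists_adj_iff (S.B ∪ S.ran) fun _ => False
  have hfresh : ∀ b, S.IsFreshFor b v := by
    rintro (_ | _)
    · exact ⟨fun h => hvC (Finset.mem_union_left _ h), fun w hw => (hv w (by simp [hw])).1⟩
    · exact ⟨fun h => hvC (Finset.mem_union_right _ h), fun w hw => (hv w (by simp [hw])).1⟩
  obtain ⟨S', w, hle, hpath, hw⟩ := S.exists_le_path hG hR hfree hl (fun ℓ _ => hfresh _) {v}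
  exact ⟨S', hle, v, w, fun h => hw hne (Finset.mem_singleton.2 h), hpath⟩

variable (α) in
def Meets (S : Approx G R Γ₂) : X ⊕ V ⊕ Finset (V × V) ⊕ List (Γ₁ ⊕ Γ₂) → Prop
  | .inl x => x ∈ S.dom
  | .inr (.inl v) => v ∈ S.ran ∧ v ∈ S.B
  | .inr (.inr (.inl F)) => IsPartialIso R R F → S.Realizes α F
  | .inr (.inr (.inr l)) => Monoid.Coprod.IsReducedWord l → l ≠ [] → S.Moves α l

theorem exists_le_meets [Finite Γ₂] [Nontrivial Γ₂] (hG : G.HasPropR) (hR : R.HasPropR)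
    (hα : ∀ A C : Finset X, ∃ g, ∀ a ∈ A, ∀ c ∈ C, α g a ≠ c ∧ ¬ G.Adj (α g a) c)
    (hfree : ∀ g ≠ 1, ∀ x, α g x ≠ x ∧ ¬ G.Adj (α g x) x) (S : Approx G R Γ₂) :
    ∀ r, ∃ S', S ≤ S' ∧ S'.Meets α r
  | .inl x => S.exists_le_mem_dom hR x
  | .inr (.inl v) => S.exists_le_mem_ran_B hG hR v
  | .inr (.inr (.inl F)) => by
    by_cases hF : IsPartialIso R R F
    · obtain ⟨t, ht⟩ := exists_ne (1 : Γ₂)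
      obtain ⟨S', hle, hS'⟩ := S.exists_le_realizes hG hR hα hF ht
      exact ⟨S', hle, fun _ => hS'⟩
    · exact ⟨S, le_rfl, fun h => absurd h hF⟩
  | .inr (.inr (.inr l)) => by
    by_cases hl : Monoid.Coprod.IsReducedWord l ∧ l ≠ []
    · obtain ⟨S', hle, hS'⟩ := S.exists_le_moves hG hR hfree hl.1 hl.2
      exact ⟨S', hle, fun _ _ => hS'⟩
    · exact ⟨S, le_rfl, fun h h' => absurd ⟨h, h'⟩ hl⟩

theorem exists_hom_of_monotone (s : ℕ → Approx G R Γ₂) (hs : Monotone s)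
    (hB : ∀ v, ∃ n, v ∈ (s n).B) :
    ∃ β : Γ₂ →* (R ≃g R), ∀ n t, ∀ v ∈ (s n).B, β t v = (s n).μ t v := by
  choose N hN using hB
  let f : Γ₂ → V → V := fun t v => (s (N v)).μ t v
  have hf : ∀ n t, ∀ v ∈ (s n).B, f t v = (s n).μ t v := fun n t v hv =>
    (μ_eq_of_le (hs (le_max_left (N v) n)) t (hN v)).symm.trans
      (μ_eq_of_le (hs (le_max_right (N v) n)) t hv)
  have hf_mul : ∀ r t v, f (r * t) v = f r (f t v) := fun r t v => by
    rw [hf _ _ _ ((s _).μ_mem t v (hN v))]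
    exact (s _).μ_mul r t v (hN v)
  have hf_one : ∀ v, f 1 v = v := fun v => (s _).μ_one v (hN v)
  have hf_adj : ∀ t v w, R.Adj (f t v) (f t w) ↔ R.Adj v w := fun t v w => by
    have hv := B_mono (hs (le_max_left (N v) (N w))) (hN v)
    have hw := B_mono (hs (le_max_right (N v) (N w))) (hN w)
    rw [hf _ t v hv, hf _ t w hw]
    exact (s _).adj_μ t v hv w hw
  let e : Γ₂ → (R ≃g R) := fun t =>
    ⟨⟨f t, f t⁻¹, fun v => by rw [← hf_mul, inv_mul_cancel, hf_one],
      fun v => by rw [← hf_mul, mul_inv_cancel, hf_one]⟩, hf_adj t _ _⟩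
  exact ⟨MonoidHom.mk' e fun r t => RelIso.ext fun v => hf_mul r t v, hf⟩

def IsRestrictionOf (S : Approx G R Γ₂) (Θ : G ≃g R) (β : Γ₂ →* (R ≃g R)) : Prop :=
  (∀ p ∈ S.P, Θ p.1 = p.2) ∧ ∀ t, ∀ v ∈ S.B, β t v = S.μ t v

theorem exists_isRestrictionOf (s : ℕ → Approx G R Γ₂) (hs : Monotone s)
    (hdom : ∀ x, ∃ n, (s n).Meets α (.inl x)) (hran : ∀ v, ∃ n, (s n).Meets α (.inr (.inl v))) :
    ∃ (Θ : G ≃g R) (β : Γ₂ →* (R ≃g R)), ∀ n, (s n).IsRestrictionOf Θ β := by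
  obtain ⟨Θ, hΘ⟩ := exists_iso_of_monotone (fun n => (s n).P) (fun m n h => P_mono (hs h))
    (fun n => (s n).isPartialIso)
    (fun x => by
      obtain ⟨n, hn⟩ := hdom x
      obtain ⟨q, hq, rfl⟩ := Finset.mem_image.1 hn
      exact ⟨n, q.2, hq⟩)
    (fun v => by
      obtain ⟨n, hn, -⟩ := hran v
      obtain ⟨q, hq, rfl⟩ := Finset.mem_image.1 hn
      exact ⟨n, q.1, hq⟩)
  obtain ⟨β, hβ⟩ := exists_hom_of_monotone s hs fun v => (hran v).imp fun _ h => h.2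
  exact ⟨Θ, β, fun n => ⟨hΘ n, hβ n⟩⟩

variable {Θ : G ≃g R} {β : Γ₂ →* (R ≃g R)}

theorem IsRestrictionOf.step (hS : S.IsRestrictionOf Θ β) {ℓ : Γ₁ ⊕ Γ₂} {v w : V}
    (h : S.Step α ℓ v w) :
    Monoid.Coprod.lift (Θ.autCongr_s15.toMonoidHom.comp α) β (Monoid.Coprod.ofSum ℓ) v = w := by
  rcases ℓ with g | t
  · obtain ⟨x, hx, hgx⟩ := h
    simp only [Monoid.Coprod.ofSum, Sum.elim_inl, Monoid.Coprod.lift_apply_inl,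
      MonoidHom.comp_apply, MulEquiv.coe_toMonoidHom, SimpleGraph.Iso.autCongr_apply_s15]
    have hxv : Θ x = v := hS.1 _ hx
    rw [← hxv, RelIso.symm_apply_apply]
    exact hS.1 _ hgx
  · simpa [Monoid.Coprod.ofSum, hS.2 t v h.1] using h.2

theorem IsRestrictionOf.path (hS : S.IsRestrictionOf Θ β) {l : List (Γ₁ ⊕ Γ₂)} {v w : V}
    (h : S.Path α l v w) :
    Monoid.Coprod.lift (Θ.autCongr_s15.toMonoidHom.comp α) β
      (l.reverse.map Monoid.Coprod.ofSum).prod v = w := by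
  induction l generalizing v with
  | nil => exact h
  | cons ℓ l ih =>
    obtain ⟨u, hu, h⟩ := h
    simp only [List.reverse_cons, List.map_append, List.prod_append, map_mul, RelIso.mul_apply,
      List.map_singleton, List.prod_singleton]
    rw [hS.step hu, ih h]

end Approx

end Approx

/-- The free product of a countably infinite group and a nontrivial finite group admits
a faithful homogeneous action on any countable graph with property (R). -/
theorem freeProduct_inftyFinite_homogeneous {Γ₁ Γ₂ : Type*} [Group Γ₁] [Group Γ₂]
    [Countable Γ₁] [Infinite Γ₁] [Finite Γ₂] (hΓ₂ : Nontrivial Γ₂)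
    {V : Type*} [Countable V] (R : SimpleGraph V) (hR : R.HasPropR) :
    ∃ ρ : Monoid.Coprod Γ₁ Γ₂ →* (R ≃g R),
      Function.Injective ρ ∧ IsHomogeneousAction R ρ := by
  classical
  obtain ⟨code, hcode⟩ := exists_seq_frequently_eq (α := Finset (Γ₁ × ℕ))
  let α := levelGraph.translate code
  obtain ⟨s, hs, hmeets⟩ := exists_monotone_seq_forall_exists (Approx.empty _ R Γ₂)
    (fun r S => S.Meets α r) fun r S => S.exists_le_meets (levelGraph.hasPropR code hcode) hR
      (levelGraph.exists_translate_separated code)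
      (fun g hg x => ⟨levelGraph.translate_ne_self code hg x,
        levelGraph.not_adj_translate_self code g x⟩) r
  obtain ⟨Θ, β, hres⟩ := Approx.exists_isRestrictionOf s hs (fun x => hmeets (.inl x))
    fun v => hmeets (.inr (.inl v))
  refine ⟨Monoid.Coprod.lift (Θ.autCongr_s15.toMonoidHom.comp α) β,
    (injective_iff_map_eq_one _).2 fun w hw => ?_, fun A φ hφ hadj => ?_⟩
  · by_contra hne
    obtain ⟨l, hl, rfl⟩ := Monoid.Coprod.exists_isReducedWord_prod_eq w
    obtain ⟨n, hn⟩ := hmeets (.inr (.inr (.inr l.reverse)))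
    obtain ⟨v, v', hvv', hpath⟩ := hn hl.reverse fun h => hne (by simp_all)
    rw [← (hres n).path hpath, List.reverse_reverse, hw] at hvv'
    exact hvv' rfl
  · obtain ⟨n, hn⟩ := hmeets (.inr (.inr (.inl (A.image fun a => (a, φ a)))))
    obtain ⟨g, h, t, hF⟩ := hn (isPartialIso_image A (fun a => a) φ fun a ha b hb =>
      ⟨⟨congrArg φ, fun h => hφ ha hb h⟩, hadj a ha b hb⟩)
    exact ⟨_, fun a ha => (hres n).path (hF (a, φ a) (Finset.mem_image_of_mem _ ha))⟩
end
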